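/- arXiv:1308.4934 — 8 statements merged into one kernel-verified Lean document; each statement's English description precedes it below -/
import Mathlib

section
/- Let g ≥ 1 and let m be a positive integer. There exists a matrix A in Sp(2g,ℤ) with A ≠ I and A^m = I if and only if there exists a prime p dividing m with p ≤ 2g+1. -/
/-!
If `A ≠ 1` and `A ^ m = 1`, a suitable power `B` of `A` has prime order `p ∣ m`. Over `ℚ` the
minimal polynomial of `B` divides `X ^ p - 1 = Φ_p (X - 1)` and is not `X - 1`, so the irreducible
`Φ_p` divides it, hence divides the characteristic polynomial: `p - 1 ≤ 2g`.

Conversely, `-1` has order `2`. For odd `p = 2n + 1 ≤ 2g + 1`, let `B(e_i, e_j) = sign (j - i)` on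
`ℤ^p`. The cyclic shift of coordinates changes `B` only by terms that vanish on the sum-zero
sublattice, so it acts on that lattice as an isometry of order `p`. In the basis
`a_k = e_{2k} - e_{2k+1}`, `b_k = e_{2k+1} - e_{2k+2} + ⋯ - e_{2n}` the form `B` is the standard
symplectic form, so the shift is an element of order `p` of `Sp(2n, ℤ)`, which embeds into
`Sp(2g, ℤ)` as `X ↦ X ⊕ 1`.
-/

open Matrix

/-- The standard symplectic form matrix `J = [[0, I_g], [-I_g, 0]]` (as a block matrix). -/
def SpJ (g : ℕ) : Matrix (Fin g ⊕ Fin g) (Fin g ⊕ Fin g) ℤ :=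
  Matrix.fromBlocks 0 1 (-1) 0

/-- `A` belongs to `Sp(2g, ℤ)`, i.e. `Aᵀ J A = J`. -/
def IsSymplectic (g : ℕ) (A : Matrix (Fin g ⊕ Fin g) (Fin g ⊕ Fin g) ℤ) : Prop :=
  Aᵀ * SpJ g * A = SpJ g

open Polynomial

theorem Matrix.prime_le_card_add_one_of_pow_eq_one {ι : Type*} [Fintype ι] [DecidableEq ι]
    {p : ℕ} [hp : Fact p.Prime] {A : Matrix ι ι ℚ} (hA : A ≠ 1) (hAp : A ^ p = 1) :
    p ≤ Fintype.card ι + 1 := by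
  have hdvd : minpoly ℚ A ∣ cyclotomic p ℚ * (X - 1) := by
    rw [cyclotomic_prime_mul_X_sub_one, minpoly.dvd_iff]
    simp [hAp]
  have hcyc : cyclotomic p ℚ ∣ minpoly ℚ A := by
    by_contra h
    have hcop := ((cyclotomic.irreducible_rat hp.out.pos).coprime_iff_not_dvd).2 h
    have h1 : minpoly ℚ A ∣ X - C 1 := by
      simpa using hcop.symm.dvd_of_dvd_mul_left hdvd
    rw [minpoly.dvd_iff] at h1
    exact hA (sub_eq_zero.mp (by simpa using h1))
  have hdeg := natDegree_le_of_dvd (hcyc.trans (Matrix.minpoly_dvd_charpoly A))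
    (Matrix.charpoly_monic A).ne_zero
  rw [natDegree_cyclotomic, Nat.totient_prime hp.out, Matrix.charpoly_natDegree_eq_dim] at hdeg
  omega

theorem Matrix.exists_prime_dvd_le_card_add_one_of_pow_eq_one {ι : Type*} [Fintype ι]
    [DecidableEq ι] {A : Matrix ι ι ℤ} {m : ℕ} (hA : A ≠ 1) (hm : 0 < m) (hAm : A ^ m = 1) :
    ∃ p, p.Prime ∧ p ∣ m ∧ p ≤ Fintype.card ι + 1 := by
  have hd : orderOf A ≠ 1 := fun h => hA (orderOf_eq_one_iff.mp h)
  set p := (orderOf A).minFac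
  have hp : Fact p.Prime := ⟨Nat.minFac_prime hd⟩
  have hdm : orderOf A ∣ m := orderOf_dvd_of_pow_eq_one hAm
  have hd0 : 0 < orderOf A := Nat.pos_of_dvd_of_pos hdm hm
  set B := A ^ (orderOf A / p)
  have hB : B ≠ 1 :=
    pow_ne_one_of_lt_orderOf (Nat.div_pos (Nat.minFac_le hd0) hp.out.pos).ne'
      (Nat.div_lt_self hd0 hp.out.one_lt)
  have hBp : B ^ p = 1 := by
    rw [← pow_mul, Nat.div_mul_cancel (Nat.minFac_dvd _), pow_orderOf_eq_one]
  refine ⟨p, hp.out, (Nat.minFac_dvd _).trans hdm, ?_⟩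
  refine prime_le_card_add_one_of_pow_eq_one (A := (Int.castRingHom ℚ).mapMatrix B) ?_ ?_
  · rwa [Ne, map_eq_one_iff _
      (Matrix.map_injective (f := ((↑) : ℤ → ℚ)) Int.cast_injective)]
  rw [← map_pow, hBp, map_one]

open Finset in
theorem Finset.sum_range_ite_eq_of_unique {M : Type*} [AddCommMonoid M] {N a : ℕ}
    (Q : ℕ → Prop) [DecidablePred Q] (x : M) (P : Prop) [Decidable P]
    (h₁ : P → a < N ∧ Q a) (h₂ : ∀ t < N, Q t → P ∧ t = a) :
    ∑ t ∈ range N, (if Q t then x else 0) = if P then x else 0 := by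
  split_ifs with hP
  · obtain ⟨haN, hQa⟩ := h₁ hP
    rw [sum_eq_single_of_mem a (mem_range.2 haN), if_pos hQa]
    exact fun t ht hta => if_neg fun hQ => hta (h₂ t (mem_range.1 ht) hQ).2
  · exact sum_eq_zero fun t ht => if_neg fun hQ => hP (h₂ t (mem_range.1 ht) hQ).1

theorem neg_one_pow_eq_ite_mod_two {R : Type*} [Ring R] (t : ℕ) :
    (-1 : R) ^ t = if t % 2 = 0 then 1 else -1 := by
  simp [neg_one_pow_eq_ite, Nat.even_iff]

open Finset in
theorem Finset.sum_Ico_neg_one_pow (a b : ℕ) :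
    ∑ t ∈ Ico a b, (-1 : ℤ) ^ t = if a < b ∧ (a + b) % 2 = 1 then (-1) ^ a else 0 := by
  induction b with
  | zero => simp
  | succ b ih =>
    rcases le_or_gt a b with hab | hab
    · rw [sum_Ico_succ_top hab, ih]
      simp only [neg_one_pow_eq_ite_mod_two]
      split_ifs <;> omega
    · rw [Ico_eq_empty (by omega), sum_empty, if_neg (by omega)]

open Finset in
theorem Finset.sum_range_ite_neg_one_pow (N a b : ℕ) :
    ∑ t ∈ range N, (if a ≤ t ∧ t < b then (-1 : ℤ) ^ t else 0) =
      if a < min b N ∧ (a + min b N) % 2 = 1 then (-1) ^ a else 0 := by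
  rw [← sum_filter, ← sum_Ico_neg_one_pow]
  congr 1
  ext t
  simp only [mem_filter, mem_range, mem_Ico]
  omega

theorem finRotate_pow_self (k : ℕ) : finRotate k ^ k = 1 := by
  rcases lt_or_ge k 2 with hk | hk
  · interval_cases k <;> exact Subsingleton.elim _ _
  · have h := (isCycle_finRotate_of_le hk).orderOf
    rw [support_finRotate_of_le hk, Finset.card_univ, Fintype.card_fin] at h
    calc finRotate k ^ k = finRotate k ^ orderOf (finRotate k) := by rw [h]
      _ = 1 := pow_orderOf_eq_one _

theorem coe_finRotate_symm (m : ℕ) (i : Fin (m + 1)) :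
    ((finRotate (m + 1)).symm i : ℕ) = if (i : ℕ) = 0 then m else i - 1 := by
  have h := coe_finRotate ((finRotate (m + 1)).symm i)
  simp only [Equiv.apply_symm_apply, Fin.ext_iff, Fin.val_last] at h
  have := ((finRotate (m + 1)).symm i).isLt
  split_ifs at h ⊢ <;> omega

namespace Matrix

section Intertwining

variable {R ι κ : Type*} [CommRing R] [Fintype ι] [Fintype κ]
  {B T : Matrix ι ι R} {P : Matrix ι κ R} {S J : Matrix κ κ R}

theorem transpose_mul_mul_eq_of_mul_eq_mul (hJ : Pᵀ * B * P = J)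
    (hT : Pᵀ * (Tᵀ * B * T) * P = J) (hS : P * S = T * P) : Sᵀ * J * S = J := by
  calc Sᵀ * J * S = (P * S)ᵀ * B * (P * S) := by
        rw [← hJ, transpose_mul]; simp only [Matrix.mul_assoc]
    _ = J := by
        rw [hS, ← hT, transpose_mul]; simp only [Matrix.mul_assoc]

theorem pow_eq_one_of_mul_eq_mul [DecidableEq ι] [DecidableEq κ] (hJ : Pᵀ * B * P = J)
    (hJu : IsUnit J) (hS : P * S = T * P) {k : ℕ} (hT : T ^ k = 1) : S ^ k = 1 := by
  have hSk : ∀ j : ℕ, P * S ^ j = T ^ j * P := by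
    intro j
    induction j with
    | zero => simp
    | succ j ih => rw [pow_succ, ← Matrix.mul_assoc, ih, Matrix.mul_assoc, hS, pow_succ,
        Matrix.mul_assoc]
  refine hJu.mul_left_cancel ?_
  rw [Matrix.mul_one, ← hJ, Matrix.mul_assoc, hSk, hT, Matrix.one_mul]

end Intertwining

section Extend

variable {R κ κ' : Type*} [CommRing R] [Fintype κ] [Fintype κ'] [DecidableEq κ]
  {Q : Matrix κ' κ R}

theorem mul_mul_transpose_mul_mul_mul_transpose (hQ : Qᵀ * Q = 1) (Y Z : Matrix κ κ R) :
    Q * Y * Qᵀ * (Q * Z * Qᵀ) = Q * (Y * Z) * Qᵀ := by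
  simp only [Matrix.mul_assoc, ← Matrix.mul_assoc Qᵀ, hQ, Matrix.one_mul]

variable [DecidableEq κ']

/-- For an isometric inclusion `Q`, this is `X` on the image of `Q` and the identity on its
orthogonal complement. -/
def extendHom (hQ : Qᵀ * Q = 1) : Matrix κ κ R →* Matrix κ' κ' R where
  toFun X := 1 + Q * (X - 1) * Qᵀ
  map_one' := by simp
  map_mul' X Y := by
    have hsplit : X * Y - 1 = (X - 1) + (Y - 1) + (X - 1) * (Y - 1) := by noncomm_ring
    rw [add_mul, mul_add, mul_add, mul_mul_transpose_mul_mul_mul_transpose hQ, hsplit]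
    simp only [Matrix.mul_add, Matrix.add_mul, mul_one, one_mul]
    abel

theorem extendHom_apply (hQ : Qᵀ * Q = 1) (X : Matrix κ κ R) :
    extendHom hQ X = 1 + Q * (X - 1) * Qᵀ := rfl

theorem transpose_mul_extendHom_mul (hQ : Qᵀ * Q = 1) (X : Matrix κ κ R) :
    Qᵀ * extendHom hQ X * Q = X := by
  rw [extendHom_apply, Matrix.mul_add, Matrix.add_mul, Matrix.mul_one, hQ]
  simp only [Matrix.mul_assoc, hQ]
  simp only [← Matrix.mul_assoc, hQ, Matrix.one_mul, Matrix.mul_one]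
  abel

theorem extendHom_injective (hQ : Qᵀ * Q = 1) : Function.Injective (extendHom hQ) :=
  Function.LeftInverse.injective (g := fun Y => Qᵀ * Y * Q) (transpose_mul_extendHom_mul hQ)

theorem transpose_extendHom_mul_mul (hQ : Qᵀ * Q = 1) {J : Matrix κ κ R} {J' : Matrix κ' κ' R}
    (hJQ : J' * Q = Q * J) (hQJ : Qᵀ * J' = J * Qᵀ) (X : Matrix κ κ R) :
    (extendHom hQ X)ᵀ * J' * extendHom hQ X = J' + Q * (Xᵀ * J * X - J) * Qᵀ := by
  have hT : (extendHom hQ X)ᵀ = 1 + Q * (Xᵀ - 1) * Qᵀ := by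
    simp [extendHom_apply, transpose_mul, Matrix.mul_assoc]
  have hJ'Q : ∀ Y : Matrix κ κ R, J' * (Q * Y * Qᵀ) = Q * (J * Y) * Qᵀ := fun Y => by
    simp only [← Matrix.mul_assoc, hJQ]
  have hQJ' : ∀ Y : Matrix κ κ R, Q * Y * Qᵀ * J' = Q * (Y * J) * Qᵀ := fun Y => by
    simp only [Matrix.mul_assoc, hQJ]
  have hform : Xᵀ * J * X - J = J * (X - 1) + (Xᵀ - 1) * J + (Xᵀ - 1) * J * (X - 1) := by
    noncomm_ring
  rw [hT, extendHom_apply, add_mul, one_mul, mul_add, mul_one, add_mul, hJ'Q, hQJ',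
    mul_mul_transpose_mul_mul_mul_transpose hQ, hform]
  simp only [Matrix.mul_add, Matrix.add_mul]
  abel

end Extend

end Matrix

theorem SpJ_mul_self (n : ℕ) : SpJ n * SpJ n = -1 := by
  simp [SpJ, fromBlocks_multiply, ← fromBlocks_one, fromBlocks_neg]

theorem isUnit_SpJ (n : ℕ) : IsUnit (SpJ n) :=
  IsUnit.of_mul_eq_one (-SpJ n) (by rw [Matrix.mul_neg, SpJ_mul_self, neg_neg])

section Inclusion

variable {n g : ℕ} (h : n ≤ g)

def finInclusion : Matrix (Fin g) (Fin n) ℤ :=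
  (1 : Matrix (Fin g) (Fin g) ℤ).submatrix id (Fin.castLE h)

theorem transpose_finInclusion_mul_self : (finInclusion h)ᵀ * finInclusion h = 1 := by
  rw [finInclusion, transpose_submatrix, transpose_one,
    ← submatrix_mul _ _ _ _ _ Function.bijective_id, Matrix.one_mul,
    submatrix_one _ (Fin.castLE_injective h)]

def symplecticInclusion : Matrix (Fin g ⊕ Fin g) (Fin n ⊕ Fin n) ℤ :=
  fromBlocks (finInclusion h) 0 0 (finInclusion h)

theorem transpose_symplecticInclusion_mul_self :
    (symplecticInclusion h)ᵀ * symplecticInclusion h = 1 := by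
  simp [symplecticInclusion, fromBlocks_transpose, fromBlocks_multiply,
    transpose_finInclusion_mul_self]

theorem SpJ_mul_symplecticInclusion :
    SpJ g * symplecticInclusion h = symplecticInclusion h * SpJ n := by
  simp [SpJ, symplecticInclusion, fromBlocks_multiply]

theorem transpose_symplecticInclusion_mul_SpJ :
    (symplecticInclusion h)ᵀ * SpJ g = SpJ n * (symplecticInclusion h)ᵀ := by
  simp [SpJ, symplecticInclusion, fromBlocks_transpose, fromBlocks_multiply]

theorem IsSymplectic.extendHom {X : Matrix (Fin n ⊕ Fin n) (Fin n ⊕ Fin n) ℤ}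
    (hX : IsSymplectic n X) :
    IsSymplectic g (extendHom (transpose_symplecticInclusion_mul_self h) X) := by
  rw [IsSymplectic, transpose_extendHom_mul_mul _ (SpJ_mul_symplecticInclusion h)
    (transpose_symplecticInclusion_mul_SpJ h), hX, sub_self, Matrix.mul_zero, Matrix.zero_mul,
    add_zero]

end Inclusion

namespace SymplecticRotation

variable (n : ℕ)

def signForm : Matrix (Fin (2 * n + 1)) (Fin (2 * n + 1)) ℤ :=
  of fun i j => (if i.val < j.val then 1 else 0) - (if j.val < i.val then 1 else 0)

@[simp]
theorem signForm_apply (i j : Fin (2 * n + 1)) :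
    signForm n i j = (if i.val < j.val then 1 else 0) - (if j.val < i.val then 1 else 0) :=
  rfl

-- The `t`-th coordinate of `a_k` (for `.inl k`) or `b_k` (for `.inr k`); coordinates are indexed
-- by `ℕ` so that sums over `Fin (2 * n + 1)` can be taken over `Finset.range`.
def frameCol : Fin n ⊕ Fin n → ℕ → ℤ
  | .inl k, t => (if t = 2 * k then 1 else 0) - (if t = 2 * k + 1 then 1 else 0)
  | .inr k, t => if 2 * k + 1 ≤ t then (-1) ^ (t + 1) else 0

def frame : Matrix (Fin (2 * n + 1)) (Fin n ⊕ Fin n) ℤ :=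
  of fun i c => frameCol n c i

@[simp]
theorem frame_apply (i : Fin (2 * n + 1)) (c : Fin n ⊕ Fin n) : frame n i c = frameCol n c i :=
  rfl

-- The cyclic shift in the basis `a, b`: `a_k ↦ b_k - b_{k+1}` and `b_k ↦ -(a_0 + ⋯ + a_k) - b_0`.
def rotation : Matrix (Fin n ⊕ Fin n) (Fin n ⊕ Fin n) ℤ :=
  fromBlocks 0 (of fun j k => -(if j.val ≤ k.val then 1 else 0))
    (of fun j k => (if j.val = k.val then 1 else 0) - (if j.val = k.val + 1 then 1 else 0))
    (of fun j _ => -(if j.val = 0 then 1 else 0))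

def cyclicShift : Matrix (Fin (2 * n + 1)) (Fin (2 * n + 1)) ℤ :=
  (finRotate (2 * n + 1))⁻¹.permMatrix ℤ

theorem sum_range_mul_frameCol_inl (f : ℕ → ℤ) (k : Fin n) :
    ∑ t ∈ Finset.range (2 * n + 1), f t * frameCol n (.inl k) t = f (2 * k) - f (2 * k + 1) := by
  have hk := k.isLt
  simp only [frameCol, mul_sub, mul_ite, mul_one, mul_zero, Finset.sum_sub_distrib,
    Finset.sum_ite_eq', Finset.mem_range]
  rw [if_pos (by omega), if_pos (by omega)]

theorem sum_frame_apply (c : Fin n ⊕ Fin n) : ∑ i, frame n i c = 0 := by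
  rw [Finset.sum_congr rfl fun i _ => frame_apply n i c,
    Fin.sum_univ_eq_sum_range (fun t => frameCol n c t)]
  rcases c with k | k
  · simpa using sum_range_mul_frameCol_inl n (fun _ => 1) k
  · have hk := k.isLt
    have h : ∀ t ∈ Finset.range (2 * n + 1), frameCol n (.inr k) t
        = -(if 2 * k.val + 1 ≤ t ∧ t < 2 * n + 1 then (-1) ^ t else 0) := by
      intro t ht
      rw [Finset.mem_range] at ht
      simp only [frameCol]
      split_ifs <;> first | ring1 | (exfalso; omega)
    rw [Finset.sum_congr rfl h, Finset.sum_neg_distrib, Finset.sum_range_ite_neg_one_pow,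
      min_self, if_neg (by omega), neg_zero]

theorem one_vecMul_frame : 1 ᵥ* frame n = 0 := by
  ext c
  simp only [vecMul, dotProduct, Pi.one_apply, one_mul, sum_frame_apply, Pi.zero_apply]

theorem signForm_mul_frame_apply_inl (j : Fin (2 * n + 1)) (k : Fin n) :
    (signForm n * frame n) j (.inl k) =
      -(if j.val = 2 * k then 1 else 0) - (if j.val = 2 * k + 1 then 1 else 0) := by
  rw [mul_apply]
  simp only [signForm_apply, frame_apply]
  rw [Fin.sum_univ_eq_sum_range (fun t => ((if j.val < t then (1 : ℤ) else 0) -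
    (if t < j.val then 1 else 0)) * frameCol n (.inl k) t), sum_range_mul_frameCol_inl]
  split_ifs <;> omega

theorem signForm_mul_frame_apply_inr (j : Fin (2 * n + 1)) (k : Fin n) :
    (signForm n * frame n) j (.inr k) = -(if 2 * k + 1 ≤ j.val then 1 else 0) := by
  rw [mul_apply]
  simp only [signForm_apply, frame_apply]
  rw [Fin.sum_univ_eq_sum_range (fun t => ((if j.val < t then (1 : ℤ) else 0) -
    (if t < j.val then 1 else 0)) * frameCol n (.inr k) t)]
  have hj := j.isLt
  have h : ∀ t ∈ Finset.range (2 * n + 1),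
      ((if j.val < t then (1 : ℤ) else 0) - (if t < j.val then 1 else 0)) * frameCol n (.inr k) t
        = (if 2 * k + 1 ≤ t ∧ t < j.val then (-1) ^ t else 0)
          - (if max (2 * k.val + 1) (j.val + 1) ≤ t ∧ t < 2 * n + 1 then (-1) ^ t else 0) := by
    intro t ht
    rw [Finset.mem_range] at ht
    simp only [frameCol, pow_succ]
    split_ifs <;> first | ring1 | (exfalso; omega)
  rw [Finset.sum_congr rfl h, Finset.sum_sub_distrib, Finset.sum_range_ite_neg_one_pow,
    Finset.sum_range_ite_neg_one_pow, min_self, min_eq_left hj.le]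
  simp only [neg_one_pow_eq_ite_mod_two]
  split_ifs <;> omega

theorem transpose_frame_mul_signForm_mul_frame : (frame n)ᵀ * signForm n * frame n = SpJ n := by
  ext c d
  rw [Matrix.mul_assoc, mul_apply]
  rcases d with k | k <;> have hk := k.isLt <;>
    simp only [transpose_apply, frame_apply, signForm_mul_frame_apply_inl,
      signForm_mul_frame_apply_inr]
  · rw [Fin.sum_univ_eq_sum_range (fun t => frameCol n c t *
      (-(if t = 2 * k then 1 else 0) - (if t = 2 * k + 1 then 1 else 0)))]
    simp only [mul_sub, mul_neg, mul_ite, mul_one, mul_zero, Finset.sum_sub_distrib,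
      Finset.sum_neg_distrib, Finset.sum_ite_eq', Finset.mem_range]
    rw [if_pos (by omega), if_pos (by omega)]
    rcases c with l | l <;> have hl := l.isLt <;>
      simp only [frameCol, SpJ, fromBlocks_apply₁₁, fromBlocks_apply₂₁, Matrix.zero_apply,
        Matrix.neg_apply, one_apply, Fin.ext_iff, neg_one_pow_eq_ite_mod_two] <;>
      split_ifs <;> omega
  · rw [Fin.sum_univ_eq_sum_range (fun t => frameCol n c t * -(if 2 * k + 1 ≤ t then 1 else 0))]
    rcases c with l | l <;> have hl := l.isLt
    · rw [Finset.sum_congr rfl fun t _ => mul_comm _ _, sum_range_mul_frameCol_inl]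
      simp only [SpJ, fromBlocks_apply₁₂, one_apply, Fin.ext_iff]
      split_ifs <;> omega
    · have h : ∀ t ∈ Finset.range (2 * n + 1),
          frameCol n (.inr l) t * -(if 2 * k + 1 ≤ t then 1 else 0) =
            if max (2 * l.val + 1) (2 * k + 1) ≤ t ∧ t < 2 * n + 1 then (-1) ^ t else 0 := by
        intro t ht
        rw [Finset.mem_range] at ht
        simp only [frameCol, pow_succ]
        split_ifs <;> first | ring1 | (exfalso; omega)
      rw [Finset.sum_congr rfl h, Finset.sum_range_ite_neg_one_pow, min_self, if_neg (by omega)]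
      rfl

theorem signForm_submatrix_finRotate :
    (signForm n).submatrix (finRotate _) (finRotate _) =
      signForm n + vecMulVec (Pi.single (Fin.last _) 2) 1 -
        vecMulVec 1 (Pi.single (Fin.last _) 2) := by
  ext i j
  have := i.isLt
  have := j.isLt
  simp only [submatrix_apply, signForm_apply, coe_finRotate, Matrix.add_apply, Matrix.sub_apply,
    vecMulVec_apply, Pi.one_apply, mul_one, one_mul, Pi.single_apply, Fin.ext_iff, Fin.val_last]
  split_ifs <;> omega

theorem transpose_frame_mul_signForm_conj :
    (frame n)ᵀ * ((cyclicShift n)ᵀ * signForm n * cyclicShift n) * frame n =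
      (frame n)ᵀ * signForm n * frame n := by
  rw [cyclicShift, transpose_permMatrix, inv_inv, PEquiv.toMatrix_toPEquiv_mul,
    PEquiv.mul_toMatrix_toPEquiv, Equiv.Perm.inv_def, Equiv.symm_symm, submatrix_submatrix,
    Function.id_comp, Function.comp_id, signForm_submatrix_finRotate, Matrix.mul_sub,
    Matrix.mul_add, Matrix.sub_mul, Matrix.add_mul]
  simp only [mul_vecMulVec, vecMulVec_mul, mulVec_transpose, one_vecMul_frame, zero_vecMulVec,
    vecMulVec_zero, Matrix.zero_mul, add_zero, sub_zero]

theorem cyclicShift_mul_frame_apply (i : Fin (2 * n + 1)) (c : Fin n ⊕ Fin n) :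
    (cyclicShift n * frame n) i c = frameCol n c (if i.val = 0 then 2 * n else i.val - 1) := by
  rw [cyclicShift, PEquiv.toMatrix_toPEquiv_mul, submatrix_apply, frame_apply, id,
    Equiv.Perm.inv_def, coe_finRotate_symm]

theorem frame_mul_rotation_apply_inl (i : Fin (2 * n + 1)) (k : Fin n) :
    (frame n * rotation n) i (.inl k) =
      frameCol n (.inl k) (if i.val = 0 then 2 * n else i.val - 1) := by
  have hk := k.isLt
  rw [mul_apply, Fintype.sum_sum_type]
  simp only [frame_apply, rotation, fromBlocks_apply₁₁, fromBlocks_apply₂₁, of_apply,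
    Matrix.zero_apply, mul_zero, Finset.sum_const_zero, zero_add, frameCol]
  rw [Fin.sum_univ_eq_sum_range (fun t =>
    (if 2 * t + 1 ≤ i.val then (-1 : ℤ) ^ (i.val + 1) else 0) *
      ((if t = k.val then 1 else 0) - (if t = k.val + 1 then 1 else 0)))]
  simp only [mul_sub, mul_ite, mul_one, mul_zero, Finset.sum_sub_distrib, Finset.sum_ite_eq',
    Finset.mem_range, neg_one_pow_eq_ite_mod_two]
  split_ifs <;> omega

theorem frame_mul_rotation_apply_inr (i : Fin (2 * n + 1)) (k : Fin n) :
    (frame n * rotation n) i (.inr k) =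
      frameCol n (.inr k) (if i.val = 0 then 2 * n else i.val - 1) := by
  have hi := i.isLt
  have hk := k.isLt
  rw [mul_apply, Fintype.sum_sum_type]
  simp only [frame_apply, rotation, fromBlocks_apply₁₂, fromBlocks_apply₂₂, of_apply, frameCol]
  rw [Fin.sum_univ_eq_sum_range (fun t => ((if i.val = 2 * t then (1 : ℤ) else 0) -
      (if i.val = 2 * t + 1 then 1 else 0)) * -(if t ≤ k.val then 1 else 0)),
    Fin.sum_univ_eq_sum_range (fun t =>
      (if 2 * t + 1 ≤ i.val then (-1 : ℤ) ^ (i.val + 1) else 0) * -(if t = 0 then 1 else 0))]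
  have h : ∀ t ∈ Finset.range n, ((if i.val = 2 * t then (1 : ℤ) else 0) -
      (if i.val = 2 * t + 1 then 1 else 0)) * -(if t ≤ k.val then 1 else 0) =
        (if t ≤ k.val ∧ i.val = 2 * t + 1 then 1 else 0) -
          (if t ≤ k.val ∧ i.val = 2 * t then 1 else 0) := by
    intro t _
    split_ifs <;> first | ring1 | (exfalso; omega)
  rw [Finset.sum_congr rfl h, Finset.sum_sub_distrib,
    Finset.sum_range_ite_eq_of_unique _ _ (i.val % 2 = 1 ∧ i.val ≤ 2 * k + 1) (a := i.val / 2)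
      (by omega) (by omega),
    Finset.sum_range_ite_eq_of_unique _ _ (i.val % 2 = 0 ∧ i.val ≤ 2 * k) (a := i.val / 2)
      (by omega) (by omega)]
  simp only [mul_neg, mul_ite, mul_one, mul_zero, Finset.sum_neg_distrib, Finset.sum_ite_eq',
    Finset.mem_range, neg_one_pow_eq_ite_mod_two]
  split_ifs <;> omega

theorem frame_mul_rotation : frame n * rotation n = cyclicShift n * frame n := by
  ext i (k | k)
  · rw [frame_mul_rotation_apply_inl, cyclicShift_mul_frame_apply]
  · rw [frame_mul_rotation_apply_inr, cyclicShift_mul_frame_apply]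

theorem isSymplectic_rotation : IsSymplectic n (rotation n) :=
  transpose_mul_mul_eq_of_mul_eq_mul (transpose_frame_mul_signForm_mul_frame n)
    ((transpose_frame_mul_signForm_conj n).trans (transpose_frame_mul_signForm_mul_frame n))
    (frame_mul_rotation n)

theorem rotation_pow : rotation n ^ (2 * n + 1) = 1 :=
  pow_eq_one_of_mul_eq_mul (transpose_frame_mul_signForm_mul_frame n) (isUnit_SpJ n)
    (frame_mul_rotation n) <| by
      rw [cyclicShift, ← permMatrixHom_apply, ← map_pow, finRotate_pow_self, map_one]

theorem rotation_ne_one (hn : 0 < n) : rotation n ≠ 1 := by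
  intro h
  have h00 := congrFun (congrFun h (.inl ⟨0, hn⟩)) (.inl ⟨0, hn⟩)
  simp [rotation] at h00

end SymplecticRotation

theorem exists_isSymplectic_ne_one_pow_prime_eq_one {g p : ℕ} (hp : p.Prime)
    (hpg : p ≤ 2 * g + 1) : ∃ A, IsSymplectic g A ∧ A ≠ 1 ∧ A ^ p = 1 := by
  obtain rfl | hodd := hp.eq_two_or_odd'
  · refine ⟨-1, by simp [IsSymplectic], fun h => ?_, by simp⟩
    have h00 := congrFun (congrFun h (.inl ⟨0, by omega⟩)) (.inl ⟨0, by omega⟩)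
    simp at h00
  · obtain ⟨n, rfl⟩ := hodd
    have hng : n ≤ g := by omega
    have hn : 0 < n := by have := hp.two_le; omega
    have hQ := transpose_symplecticInclusion_mul_self hng
    refine ⟨extendHom hQ (SymplecticRotation.rotation n),
      (SymplecticRotation.isSymplectic_rotation n).extendHom hng, ?_, ?_⟩
    · rw [Ne, ← map_one (extendHom hQ), (extendHom_injective hQ).eq_iff]
      exact SymplecticRotation.rotation_ne_one n hn
    · rw [← map_pow, SymplecticRotation.rotation_pow, map_one]

theorem stmt_0_general (g m : ℕ) (hm : 0 < m) :
    (∃ A : Matrix (Fin g ⊕ Fin g) (Fin g ⊕ Fin g) ℤ,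
        IsSymplectic g A ∧ A ≠ 1 ∧ A ^ m = 1) ↔
      ∃ p : ℕ, p.Prime ∧ p ∣ m ∧ p ≤ 2 * g + 1 := by
  constructor
  · rintro ⟨A, -, hA, hAm⟩
    obtain ⟨p, hp, hpm, hle⟩ := exists_prime_dvd_le_card_add_one_of_pow_eq_one hA hm hAm
    refine ⟨p, hp, hpm, ?_⟩
    simpa [two_mul] using hle
  · rintro ⟨p, hp, ⟨k, rfl⟩, hpg⟩
    obtain ⟨A, hA, hA1, hAp⟩ := exists_isSymplectic_ne_one_pow_prime_eq_one hp hpg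
    exact ⟨A, hA, hA1, by rw [pow_mul, hAp, one_pow]⟩

theorem stmt_0 (g m : ℕ) (hg : 1 ≤ g) (hm : 0 < m) :
    (∃ A : Matrix (Fin g ⊕ Fin g) (Fin g ⊕ Fin g) ℤ,
        IsSymplectic g A ∧ A ≠ 1 ∧ A ^ m = 1) ↔
      ∃ p : ℕ, p.Prime ∧ p ∣ m ∧ p ≤ 2 * g + 1 :=
  stmt_0_general g m hm
end

section
/- Let g ≥ 1 and let A ∈ Sp(2g,ℤ) be an element of finite order m. Then every prime p dividing m satisfies p ≤ 2g+1. -/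
open Matrix Polynomial

theorem stmt_2 (g : ℕ) (hg : 1 ≤ g)
    (A : Matrix (Fin g ⊕ Fin g) (Fin g ⊕ Fin g) ℤ) (hA : IsSymplectic g A)
    (m : ℕ) (hm : orderOf A = m) (hfin : 0 < m)
    (p : ℕ) (hp : p.Prime) (hdvd : p ∣ m) : p ≤ 2 * g + 1 := by
  haveI : Fact p.Prime := ⟨hp⟩
  haveI : Nonempty (Fin g ⊕ Fin g) := ⟨Sum.inl ⟨0, hg⟩⟩
  -- B := A ^ (m / p) has B ^ p = 1 and B ≠ 1
  set B : Matrix (Fin g ⊕ Fin g) (Fin g ⊕ Fin g) ℤ := A ^ (m / p) with hB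
  have hBp : B ^ p = 1 := by
    rw [hB, ← pow_mul, Nat.div_mul_cancel hdvd, ← hm, pow_orderOf_eq_one]
  have hBne : B ≠ 1 := by
    intro h
    rw [hB] at h
    have : m ∣ m / p := by simpa [hm] using orderOf_dvd_of_pow_eq_one h
    have hlt : m / p < m := Nat.div_lt_self hfin hp.one_lt
    have hpos : 0 < m / p := Nat.div_pos (Nat.le_of_dvd hfin hdvd) hp.pos
    exact absurd (Nat.le_of_dvd hpos this) (not_le.mpr hlt)
  -- move to ℚ
  set f : Matrix (Fin g ⊕ Fin g) (Fin g ⊕ Fin g) ℤ →+* Matrix (Fin g ⊕ Fin g) (Fin g ⊕ Fin g) ℚ := (Int.castRingHom ℚ).mapMatrix with hf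
  set C : Matrix (Fin g ⊕ Fin g) (Fin g ⊕ Fin g) ℚ := f B with hC
  have hCp : C ^ p = 1 := by rw [hC, ← map_pow, hBp, _root_.map_one]
  have hCne : C ≠ 1 := by
    intro h
    apply hBne
    have hinj : Function.Injective f := by
      intro x y hxy
      ext i j
      have h2 := congrFun (congrFun hxy i) j
      simp only [hf, RingHom.mapMatrix_apply, Int.coe_castRingHom, Matrix.map_apply] at h2
      exact_mod_cast h2
    apply hinj
    rw [← hC, h, _root_.map_one]
  -- C is a root of X^p - 1
  have haev : (Polynomial.aeval C) (X ^ p - 1 : ℚ[X]) = 0 := by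
    simp [hCp]
  have hint : IsIntegral ℚ C :=
    ⟨X ^ p - 1, monic_X_pow_sub_C 1 hp.ne_zero, by simpa using haev⟩
  have hmindvd : minpoly ℚ C ∣ (cyclotomic p ℚ) * (X - 1) := by
    rw [cyclotomic_prime_mul_X_sub_one]
    exact minpoly.dvd ℚ C haev
  have hirr : Irreducible (cyclotomic p ℚ) := cyclotomic.irreducible_rat hp.pos
  have hcyc : cyclotomic p ℚ ∣ minpoly ℚ C := by
    by_contra hnd
    have hco : IsCoprime (cyclotomic p ℚ) (minpoly ℚ C) :=
      hirr.coprime_iff_not_dvd.mpr hnd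
    have hdvd1 : minpoly ℚ C ∣ (X - 1 : ℚ[X]) :=
      (hco.symm).dvd_of_dvd_mul_left hmindvd
    have hmon := minpoly.monic hint
    have hx1 : ((X : ℚ[X]) - 1).natDegree = 1 := by
      simpa using Polynomial.natDegree_X_sub_C (1 : ℚ)
    have hXne : ((X : ℚ[X]) - 1) ≠ 0 := by
      intro h0; rw [h0] at hx1; simp at hx1
    have hdeg : (minpoly ℚ C).natDegree ≤ 1 := by
      have := Polynomial.natDegree_le_of_dvd hdvd1 hXne
      omega
    interval_cases h : (minpoly ℚ C).natDegree
    · exact minpoly.ne_one ℚ C (hmon.natDegree_eq_zero.mp h)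
    · have hm1 : Monic ((X : ℚ[X]) - 1) := by simpa using monic_X_sub_C (1 : ℚ)
      have heq : ((X : ℚ[X]) - 1) = minpoly ℚ C :=
        Polynomial.eq_of_monic_of_dvd_of_natDegree_le hmon hm1 hdvd1 (by omega)
      apply hCne
      have haev2 := minpoly.aeval ℚ C
      rw [← heq] at haev2
      simp only [map_sub, aeval_X, _root_.map_one, sub_eq_zero] at haev2
      exact haev2
  -- degree counting
  have h1 : p - 1 ≤ (minpoly ℚ C).natDegree := by
    have := Polynomial.natDegree_le_of_dvd hcyc (minpoly.ne_zero hint)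
    simpa [natDegree_cyclotomic, Nat.totient_prime hp] using this
  have h2 : (minpoly ℚ C).natDegree ≤ 2 * g := by
    have hdvdc := Matrix.minpoly_dvd_charpoly C
    have := Polynomial.natDegree_le_of_dvd hdvdc (C.charpoly_monic).ne_zero
    rw [Matrix.charpoly_natDegree_eq_dim] at this
    simpa [Fintype.card_sum, two_mul] using this
  omega
end

section
/- Let g ≥ 1 and let m be a positive integer with m ∉ {1, 2, 3, 4, 6, 10, 12, 18, 30} such that every prime p dividing m satisfies p ≤ 2g+1. Write m = p₁^{α₁}···p_k^{α_k} as a product of powers of distinct primes. Then the sum S₁ = Σ_{i=1}^{k} φ(p_i^{α_i}) satisfies S₁ > m^{α/(g+1)}, where α = log 2 / log 3. -/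
/-!
Let `q = p ^ a` be the largest prime-power factor of `m`. All prime factors of `m` lie among
the at most `g + 1` primes up to `2g + 1`, so `m ≤ q ^ (g + 1)`, hence
`m ^ (α / (g + 1)) ≤ q ^ α`. If `q ≤ 4` then `m ∣ 12`, which the excluded values rule out;
for a prime power `q ≥ 5` one checks `q² ≤ φ(q)³`, and `α < 2/3` then gives
`q ^ α < q ^ (2/3) ≤ φ(q) ≤ S₁`.
-/

namespace Nat

theorem card_le_of_forall_prime_le_two_mul_add_one {s : Finset ℕ} {N : ℕ}
    (hs : ∀ p ∈ s, p.Prime ∧ p ≤ 2 * N + 1) : s.card ≤ N + 1 := by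
  -- `p ↦ (p + 1) / 2` is injective on primes, since `2` is the only even one.
  simpa using Finset.card_le_card_of_injOn (fun p => (p + 1) / 2) (t := Finset.Icc 1 (N + 1))
    (fun p hp => by
      obtain ⟨hp, hpN⟩ := hs p hp
      have := hp.two_le
      simp only [Finset.coe_Icc, Set.mem_Icc]
      omega)
    (fun p hp r hr (h : (p + 1) / 2 = (r + 1) / 2) => by
      obtain ⟨hp, -⟩ := hs p hp
      obtain ⟨hr, -⟩ := hs r hr
      have := hp.two_le
      have := hr.two_le
      rcases hp.eq_two_or_odd' with rfl | ⟨k, rfl⟩ <;>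
      rcases hr.eq_two_or_odd' with rfl | ⟨l, rfl⟩ <;> omega)

theorem dvd_twelve_of_forall_pow_factorization_le_four {m : ℕ} (hm : m ≠ 0)
    (h : ∀ p ∈ m.primeFactors, p ^ m.factorization p ≤ 4) : m ∣ 12 := by
  rw [dvd_iff_prime_pow_dvd_dvd]
  intro p k hp hpk
  rcases k.eq_zero_or_pos with rfl | hk
  · simp
  have hpm : p ∈ m.primeFactors :=
    mem_primeFactors.2 ⟨hp, (dvd_pow_self p hk.ne').trans hpk, hm⟩
  have hle : p ^ k ≤ 4 := le_trans (pow_le_pow_right₀ hp.one_le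
    ((hp.pow_dvd_iff_le_factorization hm).1 hpk)) (h p hpm)
  have hp4 : p ≤ 4 := (le_self_pow₀ hp.one_le hk.ne').trans hle
  have hk2 : k < 3 := by
    by_contra! hk3
    have := (pow_le_pow_right₀ hp.one_le hk3).trans hle
    have := pow_le_pow_left₀ (zero_le 2) hp.two_le 3
    omega
  have := hp.two_le
  interval_cases p <;> interval_cases k <;> simp_all

theorem sq_le_totient_pow_three_of_prime_pow {p a : ℕ} (hp : p.Prime) (h : 5 ≤ p ^ a) :
    (p ^ a) ^ 2 ≤ φ (p ^ a) ^ 3 := by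
  obtain _ | b := a
  · simp at h
  rw [totient_prime_pow_succ hp, mul_pow, ← pow_mul, ← pow_mul]
  rcases lt_or_ge p 5 with hp5 | hp5
  · have := hp.two_le
    interval_cases p <;> norm_num at hp
    · obtain _ | _ | c := b
      · norm_num at h
      · norm_num at h
      simpa using
        pow_le_pow_right₀ (by norm_num : 1 ≤ 2) (by omega : (c + 3) * 2 ≤ (c + 2) * 3)
    · obtain _ | c := b
      · norm_num at h
      calc 3 ^ ((c + 2) * 2) = 3 ^ (c * 2) * 81 := by ring
        _ ≤ 3 ^ ((c + 1) * 3) * 8 := by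
          rw [show (c + 1) * 3 = c * 3 + 3 by ring, pow_add]
          have := pow_le_pow_right₀ (by norm_num : 1 ≤ 3) (by omega : c * 2 ≤ c * 3)
          omega
  · calc p ^ ((b + 1) * 2) = p ^ (b * 2) * p ^ 2 := by ring
      _ ≤ p ^ (b * 3) * (p - 1) ^ 3 := by
        refine mul_le_mul' (pow_le_pow_right₀ hp.one_le (by omega)) ?_
        obtain ⟨r, rfl⟩ := exists_add_of_le hp5
        rw [show 5 + r - 1 = 4 + r by omega]
        nlinarith

end Nat

namespace Real

theorem log_two_div_log_three_lt : log 2 / log 3 < 2 / 3 := by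
  rw [div_lt_div_iff₀ (log_pos (by norm_num)) (by norm_num), ← log_rpow (by norm_num),
    mul_comm, ← log_rpow (by norm_num)]
  exact log_lt_log (by positivity) (by norm_num)

theorem rpow_lt_of_sq_le_pow_three {x y a : ℝ} (hx : 1 < x) (hy : 0 ≤ y)
    (h : x ^ 2 ≤ y ^ 3) (ha : a < 2 / 3) : x ^ a < y := by
  refine (rpow_lt_rpow_of_exponent_lt hx ha).trans_le
    (le_of_pow_le_pow_left₀ three_ne_zero hy ?_)
  rw [← rpow_natCast, ← rpow_mul (by positivity)]
  norm_num
  exact_mod_cast h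

theorem rpow_div_le_rpow_of_le_pow {x y a : ℝ} {n : ℕ} (hx : 0 ≤ x) (hy : 0 ≤ y)
    (ha : 0 ≤ a) (hn : n ≠ 0) (h : x ≤ y ^ n) : x ^ (a / n) ≤ y ^ a := by
  calc x ^ (a / n) ≤ (y ^ n) ^ (a / n) := rpow_le_rpow hx h (by positivity)
    _ = y ^ a := by
      rw [← rpow_natCast, ← rpow_mul hy, mul_div_cancel₀ _ (by exact_mod_cast hn)]

end Real

theorem stmt_3_general (g m : ℕ) (hm : 0 < m)
    (hnot : m ∉ ({1, 2, 3, 4, 6, 10, 12, 18, 30} : Set ℕ))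
    (hprimes : ∀ p : ℕ, p.Prime → p ∣ m → p ≤ 2 * g + 1) :
    (m : ℝ) ^ ((Real.log 2 / Real.log 3) / ((g : ℝ) + 1)) <
      ((∑ p ∈ m.primeFactors, (p ^ m.factorization p).totient : ℕ) : ℝ) := by
  simp only [Set.mem_insert_iff, Set.mem_singleton_iff, not_or] at hnot
  obtain ⟨p, hp, hmax⟩ := m.primeFactors.exists_max_image (fun p => p ^ m.factorization p)
    (Nat.nonempty_primeFactors.2 (by omega))
  have hp_prime := Nat.prime_of_mem_primeFactors hp
  set q := p ^ m.factorization p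
  have hmq : m ≤ q ^ (g + 1) := calc
    m = ∏ p ∈ m.primeFactors, p ^ m.factorization p :=
      (Nat.prod_factorization_pow_eq_self hm.ne').symm
    _ ≤ q ^ m.primeFactors.card := Finset.prod_le_pow_card _ _ _ hmax
    _ ≤ q ^ (g + 1) := Nat.pow_le_pow_right (pow_pos hp_prime.pos _)
      (Nat.card_le_of_forall_prime_le_two_mul_add_one fun r hr =>
        ⟨Nat.prime_of_mem_primeFactors hr, hprimes r (Nat.prime_of_mem_primeFactors hr)
          (Nat.dvd_of_mem_primeFactors hr)⟩)
  have hq : 5 ≤ q := by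
    by_contra! hq
    have hdvd : m ∣ 12 := Nat.dvd_twelve_of_forall_pow_factorization_le_four hm.ne'
      fun r hr => (hmax r hr).trans (by omega)
    have := Nat.le_of_dvd (by norm_num) hdvd
    interval_cases m <;> omega
  calc (m : ℝ) ^ ((Real.log 2 / Real.log 3) / ((g : ℝ) + 1))
      ≤ (q : ℝ) ^ (Real.log 2 / Real.log 3) := by
        simpa using Real.rpow_div_le_rpow_of_le_pow (by positivity) (by positivity)
          (by positivity) g.succ_ne_zero (by exact_mod_cast hmq)
    _ < (q.totient : ℝ) := Real.rpow_lt_of_sq_le_pow_three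
        (by exact_mod_cast (by omega : 1 < q)) (by positivity)
        (by exact_mod_cast Nat.sq_le_totient_pow_three_of_prime_pow hp_prime hq)
        Real.log_two_div_log_three_lt
    _ ≤ _ := by
      exact_mod_cast Finset.single_le_sum (f := fun p => (p ^ m.factorization p).totient)
        (fun _ _ => Nat.zero_le _) hp

theorem stmt_3 (g m : ℕ) (hg : 1 ≤ g) (hm : 0 < m)
    (hnot : m ∉ ({1, 2, 3, 4, 6, 10, 12, 18, 30} : Set ℕ))
    (hprimes : ∀ p : ℕ, p.Prime → p ∣ m → p ≤ 2 * g + 1) :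
    (m : ℝ) ^ ((Real.log 2 / Real.log 3) / ((g : ℝ) + 1)) <
      ((∑ p ∈ m.primeFactors, (p ^ m.factorization p).totient : ℕ) : ℝ) :=
  stmt_3_general g m hm hnot hprimes
end

section
/- Let g ≥ 1 and let m be a positive integer with m ≡ 2 (mod 4) and m ∉ {1, 2, 3, 4, 6, 10, 12, 18, 30}, such that every prime p dividing m satisfies p ≤ 2g+1. Write m = 2·p₂^{α₂}···p_k^{α_k}, where p₂ < ··· < p_k are the odd prime divisors of m, and set n = p₂^{α₂}···p_k^{α_k} = m/2. Then the sum S₂ = Σ_{i=2}^{k} φ(p_i^{α_i}) satisfies S₂ > n^{α/g}, where α = log 2 / log 3. -/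
/-!
Put `α = log 2 / log 3 = logb 3 2` and `n = m / 2`, which is odd and differs from `1` and `3`.
Its prime factors are distinct odd primes at most `2g + 1`, so there are at most `g` of them,
and hence `n ≤ M ^ g` for the largest prime power `M = q ^ a` exactly dividing `n`; thus
`n ^ (α / g) ≤ M ^ α`. Since `n ≠ 3`, also `M ≠ 3`, and for every odd prime power `M ≠ 3`
one has `M ^ α < φ(M) = q ^ (a - 1) (q - 1)`: this comes from `3 ^ α = 2`, `q ^ α < q`, and,
for `q > 3`, Bernoulli's inequality `q ^ α = 2 (1 + (q / 3 - 1)) ^ α ≤ 2 (1 + α (q / 3 - 1))`,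
which is `< q - 1`.
Finally `φ(M)` is one of the terms of the sum.
-/

open Real

lemma logb_three_two_lt_one : logb 3 2 < 1 := by
  rw [logb_lt_iff_lt_rpow (by norm_num) (by norm_num)]; norm_num

lemma rpow_logb_three_two_lt_sub_one {x : ℝ} (hx : 3 < x) : x ^ logb 3 2 < x - 1 := by
  have hα0 : 0 ≤ logb 3 2 := logb_nonneg (by norm_num) (by norm_num)
  have hbern : (1 + (x / 3 - 1)) ^ logb 3 2 ≤ 1 + logb 3 2 * (x / 3 - 1) :=
    rpow_one_add_le_one_add_mul_self (by linarith) hα0 logb_three_two_lt_one.le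
  calc x ^ logb 3 2 = 3 ^ logb 3 2 * (1 + (x / 3 - 1)) ^ logb 3 2 := by
        rw [← mul_rpow (by norm_num) (by linarith)]; ring_nf
    _ ≤ 2 * (1 + logb 3 2 * (x / 3 - 1)) := by
        rw [rpow_logb (by norm_num) (by norm_num) (by norm_num)]; linarith
    _ < x - 1 := by nlinarith [logb_three_two_lt_one]

lemma rpow_logb_three_two_le_sub_one {x : ℝ} (hx : 3 ≤ x) : x ^ logb 3 2 ≤ x - 1 := by
  rcases hx.eq_or_lt with rfl | hx
  · rw [rpow_logb (by norm_num) (by norm_num) (by norm_num)]; norm_num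
  · exact (rpow_logb_three_two_lt_sub_one hx).le

lemma Nat.Prime.rpow_logb_three_two_lt_totient_pow {p a : ℕ} (hp : p.Prime) (hp2 : p ≠ 2)
    (ha : a ≠ 0) (h3 : p ^ a ≠ 3) : ((p ^ a : ℕ) : ℝ) ^ logb 3 2 < (p ^ a).totient := by
  have hp3 : (3 : ℝ) ≤ p := by exact_mod_cast (hp.two_le.lt_of_ne' hp2)
  obtain ⟨b, rfl⟩ := Nat.exists_eq_add_one_of_ne_zero ha
  rw [Nat.totient_prime_pow_succ hp, Nat.cast_pow, ← rpow_pow_comm (by linarith), pow_succ]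
  push_cast [hp.one_le]
  rcases b.eq_zero_or_pos with rfl | hb
  · have hp3' : (3 : ℝ) < p := by
      refine hp3.lt_of_ne fun h => h3 ?_
      simp only [zero_add, pow_one]; exact_mod_cast h.symm
    simpa using rpow_logb_three_two_lt_sub_one hp3'
  · have hlt : (p : ℝ) ^ logb 3 2 < p :=
      rpow_lt_self_of_one_lt (by linarith) logb_three_two_lt_one
    exact mul_lt_mul_of_lt_of_le_of_nonneg_of_pos (pow_lt_pow_left₀ hlt (by positivity) hb.ne')
      (rpow_logb_three_two_le_sub_one hp3) (by positivity) (by linarith)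

lemma Real.rpow_div_le_of_le_pow {x M β : ℝ} {k g : ℕ} (hx : 0 ≤ x) (hM : 1 ≤ M)
    (hβ : 0 ≤ β) (hxM : x ≤ M ^ k) (hkg : k ≤ g) : x ^ (β / g) ≤ M ^ β := by
  rcases g.eq_zero_or_pos with rfl | hg
  · simpa using one_le_rpow hM hβ
  calc x ^ (β / g) ≤ (M ^ k) ^ (β / g) := rpow_le_rpow hx hxM (by positivity)
    _ = M ^ (k * (β / g)) := by rw [← rpow_natCast, ← rpow_mul (by linarith)]
    _ ≤ M ^ β := by
        refine rpow_le_rpow_of_exponent_le hM ?_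
        rw [mul_div_assoc', div_le_iff₀ (by positivity), mul_comm]
        exact mul_le_mul_of_nonneg_left (by exact_mod_cast hkg) hβ

lemma Nat.sum_primeFactors_two_mul_erase_two {M : Type*} [AddCommMonoid M] {n : ℕ}
    (hn : Odd n) (f : ℕ → ℕ → M) :
    ∑ p ∈ (2 * n).primeFactors.erase 2, f p ((2 * n).factorization p) =
      ∑ p ∈ n.primeFactors, f p (n.factorization p) := by
  have hn0 : n ≠ 0 := hn.pos.ne'
  have h2 : 2 ∉ n.primeFactors := fun h => by
    simpa using hn.not_two_dvd_nat (Nat.dvd_of_mem_primeFactors h)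
  rw [Nat.primeFactors_mul two_ne_zero hn0, Nat.prime_two.primeFactors, Finset.singleton_union,
    Finset.erase_insert h2]
  refine Finset.sum_congr rfl fun p hp => ?_
  have hp2 : p ≠ 2 := ne_of_mem_of_not_mem hp h2
  simp [Nat.factorization_mul two_ne_zero hn0, Nat.prime_two.factorization, hp2.symm]

lemma Nat.three_le_of_mem_primeFactors_of_odd {n p : ℕ} (hn : Odd n)
    (hp : p ∈ n.primeFactors) : 3 ≤ p :=
  (Nat.prime_of_mem_primeFactors hp).two_le.lt_of_ne'
    (hn.ne_two_of_dvd_nat (Nat.dvd_of_mem_primeFactors hp))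

lemma Nat.card_primeFactors_le_of_odd {n g : ℕ} (hn : Odd n)
    (h : ∀ p ∈ n.primeFactors, p ≤ 2 * g + 1) : n.primeFactors.card ≤ g := by
  have hodd (p : ℕ) (hp : p ∈ n.primeFactors) : p % 2 = 1 :=
    Nat.odd_iff.mp (hn.of_dvd_nat (Nat.dvd_of_mem_primeFactors hp))
  calc n.primeFactors.card ≤ (Finset.Icc 1 g).card := by
        refine Finset.card_le_card_of_injOn (· / 2) (fun p hp => ?_) (fun p hp q hq hpq => ?_)
        · have := Nat.three_le_of_mem_primeFactors_of_odd hn hp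
          have := h p hp
          simp only [Finset.coe_Icc, Set.mem_Icc]; omega
        · have := hodd p hp; have := hodd q hq
          simp only at hpq; omega
    _ = g := by simp

lemma Nat.exists_max_prime_pow_ne_three {n : ℕ} (hn : Odd n) (h1 : n ≠ 1) (h3 : n ≠ 3) :
    ∃ q ∈ n.primeFactors, q ^ n.factorization q ≠ 3 ∧
      ∀ p ∈ n.primeFactors, p ^ n.factorization p ≤ q ^ n.factorization q := by
  have hn0 : n ≠ 0 := hn.pos.ne'
  obtain ⟨q, hq, hmax⟩ := n.primeFactors.exists_max_image (fun p => p ^ n.factorization p)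
    (Nat.nonempty_primeFactors.mpr (by omega))
  refine ⟨q, hq, fun hq3 => h3 ?_, hmax⟩
  have heq3 (p : ℕ) (hp : p ∈ n.primeFactors) : p = 3 := by
    have := Nat.three_le_of_mem_primeFactors_of_odd hn hp
    have := le_self_pow₀ (Nat.prime_of_mem_primeFactors hp).one_le
      (Finsupp.mem_support_iff (f := n.factorization).mp hp)
    have := hmax p hp
    omega
  have hP : n.primeFactors = {q} :=
    Finset.eq_singleton_iff_unique_mem.mpr ⟨hq, fun p hp => (heq3 p hp).trans (heq3 q hq).symm⟩
  rw [Nat.prod_primeFactors_pow_factorization hn0, hP, Finset.prod_singleton, hq3]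

lemma Nat.rpow_logb_three_two_div_lt_sum_totient {n g : ℕ} (hn : Odd n) (h1 : n ≠ 1)
    (h3 : n ≠ 3) (hg : n.primeFactors.card ≤ g) :
    (n : ℝ) ^ (logb 3 2 / g) <
      ∑ p ∈ n.primeFactors, ((p ^ n.factorization p).totient : ℝ) := by
  obtain ⟨q, hq, hq3, hmax⟩ := Nat.exists_max_prime_pow_ne_three hn h1 h3
  have hqp := Nat.prime_of_mem_primeFactors hq
  have hle : n ≤ (q ^ n.factorization q) ^ n.primeFactors.card := by
    conv_lhs => rw [Nat.prod_primeFactors_pow_factorization hn.pos.ne']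
    exact Finset.prod_le_pow_card _ _ _ hmax
  calc (n : ℝ) ^ (logb 3 2 / g) ≤ ((q ^ n.factorization q : ℕ) : ℝ) ^ logb 3 2 :=
        Real.rpow_div_le_of_le_pow (Nat.cast_nonneg _)
          (by exact_mod_cast Nat.one_le_pow _ _ hqp.pos)
          (logb_nonneg (by norm_num) (by norm_num)) (by exact_mod_cast hle) hg
    _ < (q ^ n.factorization q).totient :=
        hqp.rpow_logb_three_two_lt_totient_pow
          (hn.ne_two_of_dvd_nat (Nat.dvd_of_mem_primeFactors hq))
          (Finsupp.mem_support_iff (f := n.factorization).mp hq) hq3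
    _ ≤ ∑ p ∈ n.primeFactors, ((p ^ n.factorization p).totient : ℝ) :=
        Finset.single_le_sum (f := fun p => ((p ^ n.factorization p).totient : ℝ))
          (fun p _ => Nat.cast_nonneg _) hq

theorem stmt_4_general (g m : ℕ) (hmod : m % 4 = 2)
    (hnot : m ∉ ({1, 2, 3, 4, 6, 10, 12, 18, 30} : Set ℕ))
    (hprimes : ∀ p : ℕ, p.Prime → p ∣ m → p ≤ 2 * g + 1) :
    ((m / 2 : ℕ) : ℝ) ^ ((Real.log 2 / Real.log 3) / (g : ℝ)) <
      ((∑ p ∈ m.primeFactors.erase 2, (p ^ m.factorization p).totient : ℕ) : ℝ) := by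
  obtain ⟨n, rfl, hn⟩ : ∃ n, m = 2 * n ∧ Odd n :=
    ⟨m / 2, by omega, Nat.odd_iff.mpr (by omega)⟩
  have h1 : n ≠ 1 := by rintro rfl; exact hnot (by simp)
  have h3 : n ≠ 3 := by rintro rfl; exact hnot (by simp)
  have hg : n.primeFactors.card ≤ g := Nat.card_primeFactors_le_of_odd hn fun p hp =>
    hprimes p (Nat.prime_of_mem_primeFactors hp) ((Nat.dvd_of_mem_primeFactors hp).mul_left 2)
  rw [Nat.mul_div_cancel_left n two_pos,
    Nat.sum_primeFactors_two_mul_erase_two hn fun p k => (p ^ k).totient]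
  push_cast
  exact Nat.rpow_logb_three_two_div_lt_sum_totient hn h1 h3 hg

theorem stmt_4 (g m : ℕ) (hg : 1 ≤ g) (hm : 0 < m) (hmod : m % 4 = 2)
    (hnot : m ∉ ({1, 2, 3, 4, 6, 10, 12, 18, 30} : Set ℕ))
    (hprimes : ∀ p : ℕ, p.Prime → p ∣ m → p ≤ 2 * g + 1) :
    ((m / 2 : ℕ) : ℝ) ^ ((Real.log 2 / Real.log 3) / (g : ℝ)) <
      ((∑ p ∈ m.primeFactors.erase 2, (p ^ m.factorization p).totient : ℕ) : ℝ) :=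
  stmt_4_general g m hmod hnot hprimes
end

section
/- Let g ≥ 1 and let p be a prime with p ≤ 2g+1. Then there exists a matrix A ∈ Sp(2g,ℤ) whose order is exactly p. -/
open Matrix Finset

namespace Stmt7Aux

def a11 (k i j : ℕ) : ℤ := if j < k then 0 else if i = j then 1 else 0
def a21 (k i j : ℕ) : ℤ := if j < k ∧ i ≤ j then 1 else 0
def a12 (k i j : ℕ) : ℤ :=
  if j+1 < k then (if i = j+1 then 1 else if i = j then -1 else 0)
  else if j+1 = k then (if i+1 = k then -1 else 0) else 0
def a22 (k i j : ℕ) : ℤ :=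
  if j+1 = k then (if i < k then -1 else 0)
  else if j+1 < k then 0 else if i = j then 1 else 0

def Amat (g k : ℕ) : Matrix (Fin g ⊕ Fin g) (Fin g ⊕ Fin g) ℤ :=
  Matrix.of fun r c => match r, c with
  | .inl i, .inl j => a11 k i j
  | .inr i, .inl j => a21 k i j
  | .inl i, .inr j => a12 k i j
  | .inr i, .inr j => a22 k i j

lemma sumA11 {g k i : ℕ} (hi : i < g) (f : ℕ → ℤ) :
    ∑ a ∈ range g, a11 k a i * f a = if i < k then 0 else f i := by
  by_cases h : i < k
  · rw [if_pos h]
    apply Finset.sum_eq_zero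
    intro a _
    rw [a11, if_pos h, zero_mul]
  · rw [if_neg h]
    have : ∀ a ∈ range g, a11 k a i * f a = if a = i then f a else 0 := by
      intro a _
      rw [a11, if_neg h]
      split_ifs <;> simp
    rw [Finset.sum_congr rfl this, Finset.sum_ite_eq', if_pos (mem_range.2 hi)]

lemma sumA12 {g k i : ℕ} (hk : k ≤ g) (hi : i < g) (f : ℕ → ℤ) :
    ∑ a ∈ range g, a12 k a i * f a =
      if i+1 < k then f (i+1) - f i else if i+1 = k then -(f i) else 0 := by
  by_cases h1 : i+1 < k
  · rw [if_pos h1]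
    have : ∀ a ∈ range g, a12 k a i * f a =
        (if a = i+1 then f a else 0) + (if a = i then -(f a) else 0) := by
      intro a _
      rw [a12, if_pos h1]
      split_ifs <;> (first | ring1 | (exfalso; omega) | (exfalso; simp_all))
    rw [Finset.sum_congr rfl this, Finset.sum_add_distrib, Finset.sum_ite_eq',
      Finset.sum_ite_eq', if_pos (mem_range.2 (by omega)), if_pos (mem_range.2 hi)]
    ring
  · by_cases h2 : i+1 = k
    · rw [if_neg h1, if_pos h2]
      have : ∀ a ∈ range g, a12 k a i * f a = if a = i then -(f a) else 0 := by
        intro a _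
        rw [a12, if_neg h1, if_pos h2]
        split_ifs <;> (first | ring1 | (exfalso; omega) | (exfalso; simp_all))
      rw [Finset.sum_congr rfl this, Finset.sum_ite_eq', if_pos (mem_range.2 hi)]
    · rw [if_neg h1, if_neg h2]
      apply Finset.sum_eq_zero
      intro a _
      rw [a12, if_neg h1, if_neg h2, zero_mul]

lemma sympl_entry {g : ℕ} (M : Matrix (Fin g ⊕ Fin g) (Fin g ⊕ Fin g) ℤ) (r c : Fin g ⊕ Fin g) :
    (Mᵀ * SpJ g * M) r c =
      (∑ a : Fin g, M (.inl a) r * M (.inr a) c) - ∑ a : Fin g, M (.inl a) c * M (.inr a) r := by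
  rw [Matrix.mul_assoc, Matrix.mul_apply]
  rw [Fintype.sum_sum_type]
  have h1 : ∀ a : Fin g, (SpJ g * M) (.inl a) c = M (.inr a) c := by
    intro a
    rw [Matrix.mul_apply, Fintype.sum_sum_type]
    simp [SpJ, Matrix.one_apply, ite_mul]
  have h2 : ∀ a : Fin g, (SpJ g * M) (.inr a) c = -(M (.inl a) c) := by
    intro a
    rw [Matrix.mul_apply, Fintype.sum_sum_type]
    simp [SpJ, Matrix.one_apply, ite_mul]
  simp only [Matrix.transpose_apply, h1, h2]
  have h3 : ∀ a : Fin g, M (.inr a) r * -(M (.inl a) c) = -(M (.inl a) c * M (.inr a) r) :=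
    fun a => by ring
  simp only [h3, Finset.sum_neg_distrib, sub_eq_add_neg]

theorem symp (g k : ℕ) (hk : k ≤ g) : (Amat g k)ᵀ * SpJ g * Amat g k = SpJ g := by
  ext r c
  rw [sympl_entry]
  rcases r with i | i <;> rcases c with j | j <;>
    simp only [Amat, Matrix.of_apply]
  · rw [Fin.sum_univ_eq_sum_range (fun n => a11 k n ↑i * a21 k n ↑j) g,
      Fin.sum_univ_eq_sum_range (fun n => a11 k n ↑j * a21 k n ↑i) g,
      sumA11 i.isLt, sumA11 j.isLt]
    simp only [SpJ, Matrix.fromBlocks_apply₁₁, Matrix.zero_apply, a21]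
    split_ifs <;> omega
  · rw [Fin.sum_univ_eq_sum_range (fun n => a11 k n ↑i * a22 k n ↑j) g,
      Fin.sum_univ_eq_sum_range (fun n => a12 k n ↑j * a21 k n ↑i) g,
      sumA11 i.isLt, sumA12 hk j.isLt]
    simp only [SpJ, Matrix.fromBlocks_apply₁₂, Matrix.one_apply, Fin.ext_iff, a21, a22]
    split_ifs <;> omega
  · rw [Fin.sum_univ_eq_sum_range (fun n => a12 k n ↑i * a21 k n ↑j) g,
      Fin.sum_univ_eq_sum_range (fun n => a11 k n ↑j * a22 k n ↑i) g,
      sumA12 hk i.isLt, sumA11 j.isLt]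
    simp only [SpJ, Matrix.fromBlocks_apply₂₁, Matrix.neg_apply, Matrix.one_apply,
      Fin.ext_iff, a21, a22]
    split_ifs <;> omega
  · rw [Fin.sum_univ_eq_sum_range (fun n => a12 k n ↑i * a22 k n ↑j) g,
      Fin.sum_univ_eq_sum_range (fun n => a12 k n ↑j * a22 k n ↑i) g,
      sumA12 hk i.isLt, sumA12 hk j.isLt]
    simp only [SpJ, Matrix.fromBlocks_apply₂₂, Matrix.zero_apply, a22]
    split_ifs <;> omega


/-! vectors -/

def vvl (t i : ℕ) : ℤ := if t = 2*i then 1 else if t = 2*i+2 then -1 else 0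
def vvr (t i : ℕ) : ℤ := if t = 2*i+1 then 1 else 0

def mk (g : ℕ) (xl xr : ℕ → ℤ) : (Fin g ⊕ Fin g) → ℤ :=
  fun r => match r with | .inl i => xl i | .inr i => xr i

def vv (g t : ℕ) : (Fin g ⊕ Fin g) → ℤ := mk g (vvl t) (vvr t)

def sv (g k : ℕ) : (Fin g ⊕ Fin g) → ℤ :=
  mk g (fun i => if i+1 = k then 1 else 0) (fun i => if i < k then 1 else 0)

lemma mulVec_mk_inl (g k : ℕ) (xl xr : ℕ → ℤ) (a : Fin g) :
    ((Amat g k) *ᵥ (mk g xl xr)) (.inl a)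
      = (∑ j ∈ range g, a11 k a j * xl j) + ∑ j ∈ range g, a12 k a j * xr j := by
  rw [Matrix.mulVec, dotProduct, Fintype.sum_sum_type]
  simp only [Amat, Matrix.of_apply, mk]
  rw [Fin.sum_univ_eq_sum_range (fun j => a11 k ↑a j * xl j) g,
    Fin.sum_univ_eq_sum_range (fun j => a12 k ↑a j * xr j) g]

lemma mulVec_mk_inr (g k : ℕ) (xl xr : ℕ → ℤ) (a : Fin g) :
    ((Amat g k) *ᵥ (mk g xl xr)) (.inr a)
      = (∑ j ∈ range g, a21 k a j * xl j) + ∑ j ∈ range g, a22 k a j * xr j := by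
  rw [Matrix.mulVec, dotProduct, Fintype.sum_sum_type]
  simp only [Amat, Matrix.of_apply, mk]
  rw [Fin.sum_univ_eq_sum_range (fun j => a21 k ↑a j * xl j) g,
    Fin.sum_univ_eq_sum_range (fun j => a22 k ↑a j * xr j) g]


lemma step_even (g k m : ℕ) (hk : k ≤ g) (hm : m < k) :
    (Amat g k) *ᵥ vv g (2*m) = vv g (2*m+1) := by
  funext r
  rcases r with a | a
  · rw [vv, mulVec_mk_inl]
    have h1 : ∑ j ∈ range g, a11 k ↑a j * vvl (2*m) j = 0 := by
      apply Finset.sum_eq_zero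
      intro j _
      rw [a11, vvl]
      split_ifs <;> (first | ring1 | (exfalso; omega) | (exfalso; simp_all))
    have h2 : ∑ j ∈ range g, a12 k ↑a j * vvr (2*m) j = 0 := by
      apply Finset.sum_eq_zero
      intro j _
      rw [vvr, if_neg (by omega), mul_zero]
    rw [h1, h2]
    show (0:ℤ) + 0 = vvl (2*m+1) ↑a
    rw [vvl, if_neg (by omega), if_neg (by omega)]
    norm_num
  · rw [vv, mulVec_mk_inr]
    have h2 : ∑ j ∈ range g, a22 k ↑a j * vvr (2*m) j = 0 := by
      apply Finset.sum_eq_zero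
      intro j _
      rw [vvr, if_neg (by omega), mul_zero]
    rw [h2]
    show _ + (0:ℤ) = vvr (2*m+1) ↑a
    by_cases hm0 : m = 0
    · subst hm0
      have h3 : ∀ j ∈ range g, a21 k ↑a j * vvl (2*0) j = if j = 0 then a21 k ↑a j else 0 := by
        intro j _
        rw [vvl]
        split_ifs <;> (first | ring1 | (exfalso; omega) | (exfalso; simp_all))
      rw [Finset.sum_congr rfl h3, Finset.sum_ite_eq', if_pos (mem_range.2 (by omega))]
      rw [a21, vvr]
      split_ifs <;> omega
    · have h3 : ∀ j ∈ range g, a21 k ↑a j * vvl (2*m) j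
          = (if j = m then a21 k ↑a j else 0) + (if j = m-1 then -(a21 k ↑a j) else 0) := by
        intro j _
        rw [vvl]
        split_ifs <;> (first | ring1 | (exfalso; omega) | (exfalso; simp_all))
      rw [Finset.sum_congr rfl h3, Finset.sum_add_distrib, Finset.sum_ite_eq', Finset.sum_ite_eq',
        if_pos (mem_range.2 (by omega)), if_pos (mem_range.2 (by omega))]
      rw [a21, a21, vvr]
      split_ifs <;> omega

lemma step_odd (g k m : ℕ) (hk : k ≤ g) (hm : m + 1 < k) :
    (Amat g k) *ᵥ vv g (2*m+1) = vv g (2*m+2) := by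
  funext r
  rcases r with a | a
  · rw [vv, mulVec_mk_inl]
    have h1 : ∑ j ∈ range g, a11 k ↑a j * vvl (2*m+1) j = 0 := by
      apply Finset.sum_eq_zero
      intro j _
      rw [vvl, if_neg (by omega), if_neg (by omega), mul_zero]
    have h3 : ∀ j ∈ range g, a12 k ↑a j * vvr (2*m+1) j = if j = m then a12 k ↑a j else 0 := by
      intro j _
      rw [vvr]
      split_ifs <;> (first | ring1 | (exfalso; omega) | (exfalso; simp_all))
    rw [h1, Finset.sum_congr rfl h3, Finset.sum_ite_eq', if_pos (mem_range.2 (by omega))]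
    show (0:ℤ) + a12 k ↑a m = vvl (2*m+2) ↑a
    rw [a12, vvl]
    split_ifs <;> omega
  · rw [vv, mulVec_mk_inr]
    have h1 : ∑ j ∈ range g, a21 k ↑a j * vvl (2*m+1) j = 0 := by
      apply Finset.sum_eq_zero
      intro j _
      rw [vvl, if_neg (by omega), if_neg (by omega), mul_zero]
    have h3 : ∀ j ∈ range g, a22 k ↑a j * vvr (2*m+1) j = if j = m then a22 k ↑a j else 0 := by
      intro j _
      rw [vvr]
      split_ifs <;> (first | ring1 | (exfalso; omega) | (exfalso; simp_all))
    rw [h1, Finset.sum_congr rfl h3, Finset.sum_ite_eq', if_pos (mem_range.2 (by omega))]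
    show (0:ℤ) + a22 k ↑a m = vvr (2*m+2) ↑a
    rw [a22, vvr]
    split_ifs <;> omega

lemma step_last (g k m : ℕ) (hk : k ≤ g) (hm : m + 1 = k) :
    (Amat g k) *ᵥ vv g (2*m+1) = -(sv g k) := by
  funext r
  rcases r with a | a
  · rw [vv, mulVec_mk_inl]
    have h1 : ∑ j ∈ range g, a11 k ↑a j * vvl (2*m+1) j = 0 := by
      apply Finset.sum_eq_zero
      intro j _
      rw [vvl, if_neg (by omega), if_neg (by omega), mul_zero]
    have h3 : ∀ j ∈ range g, a12 k ↑a j * vvr (2*m+1) j = if j = m then a12 k ↑a j else 0 := by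
      intro j _
      rw [vvr]
      split_ifs <;> (first | ring1 | (exfalso; omega) | (exfalso; simp_all))
    rw [h1, Finset.sum_congr rfl h3, Finset.sum_ite_eq', if_pos (mem_range.2 (by omega))]
    show (0:ℤ) + a12 k ↑a m = -(if (a:ℕ)+1 = k then (1:ℤ) else 0)
    rw [a12]
    split_ifs <;> omega
  · rw [vv, mulVec_mk_inr]
    have h1 : ∑ j ∈ range g, a21 k ↑a j * vvl (2*m+1) j = 0 := by
      apply Finset.sum_eq_zero
      intro j _
      rw [vvl, if_neg (by omega), if_neg (by omega), mul_zero]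
    have h3 : ∀ j ∈ range g, a22 k ↑a j * vvr (2*m+1) j = if j = m then a22 k ↑a j else 0 := by
      intro j _
      rw [vvr]
      split_ifs <;> (first | ring1 | (exfalso; omega) | (exfalso; simp_all))
    rw [h1, Finset.sum_congr rfl h3, Finset.sum_ite_eq', if_pos (mem_range.2 (by omega))]
    show (0:ℤ) + a22 k ↑a m = -(if (a:ℕ) < k then (1:ℤ) else 0)
    rw [a22]
    split_ifs <;> omega

lemma step (g k : ℕ) (hk : k ≤ g) (t : ℕ) (ht : t + 1 < 2*k) :
    (Amat g k) *ᵥ vv g t = vv g (t+1) := by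
  obtain ⟨m, hm⟩ : ∃ m, t = 2*m ∨ t = 2*m+1 := ⟨t/2, by omega⟩
  rcases hm with rfl | rfl
  · exact step_even g k m hk (by omega)
  · exact step_odd g k m hk (by omega)


lemma sv_sum (g k : ℕ) (hk : k ≤ g) (hk1 : 1 ≤ k) :
    ∑ t ∈ range (2*k), vv g t = sv g k := by
  funext r
  rw [Finset.sum_apply]
  rcases r with a | a
  · have h3 : ∀ t ∈ range (2*k), vv g t (Sum.inl a)
        = (if t = 2*(a:ℕ) then (1:ℤ) else 0) + (if t = 2*(a:ℕ)+2 then (-1:ℤ) else 0) := by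
      intro t _
      show vvl t ↑a = _
      rw [vvl]
      split_ifs <;> (first | ring1 | (exfalso; omega) | (exfalso; simp_all))
    rw [Finset.sum_congr rfl h3, Finset.sum_add_distrib, Finset.sum_ite_eq', Finset.sum_ite_eq']
    show _ = (if (a:ℕ)+1 = k then (1:ℤ) else 0)
    simp only [mem_range]
    split_ifs <;> omega
  · have h3 : ∀ t ∈ range (2*k), vv g t (Sum.inr a) = (if t = 2*(a:ℕ)+1 then (1:ℤ) else 0) := by
      intro t _
      show vvr t ↑a = _
      rw [vvr]
    rw [Finset.sum_congr rfl h3, Finset.sum_ite_eq']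
    show _ = (if (a:ℕ) < k then (1:ℤ) else 0)
    simp only [mem_range]
    split_ifs <;> omega

lemma mulVec_sum' {I : Type*} [Fintype I] [DecidableEq I] (M : Matrix I I ℤ) (s : Finset ℕ)
    (f : ℕ → I → ℤ) : M *ᵥ (∑ t ∈ s, f t) = ∑ t ∈ s, M *ᵥ f t := by
  funext r
  simp only [Matrix.mulVec, dotProduct, Finset.sum_apply, Finset.mul_sum]
  exact Finset.sum_comm

lemma orbit (g k : ℕ) (hk : k ≤ g) (t : ℕ) (ht : t < 2*k) :
    ((Amat g k)^t) *ᵥ vv g 0 = vv g t := by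
  induction t with
  | zero => rw [pow_zero, Matrix.one_mulVec]
  | succ n ih =>
    rw [pow_succ', ← Matrix.mulVec_mulVec, ih (by omega), step g k hk n (by omega)]

lemma Asv (g k : ℕ) (hk : k ≤ g) (hk1 : 1 ≤ k) :
    (Amat g k) *ᵥ sv g k = -(vv g 0) := by
  obtain ⟨K, rfl⟩ : ∃ K, k = K+1 := ⟨k-1, by omega⟩
  rw [← sv_sum g (K+1) hk (by omega), mulVec_sum']
  have h2k : 2*(K+1) = (2*K+1)+1 := by ring
  rw [h2k, Finset.sum_range_succ]
  have hstep : ∀ t ∈ range (2*K+1), (Amat g (K+1)) *ᵥ vv g t = vv g (t+1) := by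
    intro t ht
    exact step g (K+1) hk t (by simp only [mem_range] at ht; omega)
  rw [Finset.sum_congr rfl hstep, step_last g (K+1) K hk rfl]
  have hs : ∑ t ∈ range (2*K+1), vv g (t+1) = (∑ t ∈ range ((2*K+1)+1), vv g t) - vv g 0 := by
    rw [eq_sub_iff_add_eq]
    exact (Finset.sum_range_succ' (fun t => vv g t) (2*K+1)).symm
  rw [hs, ← h2k, sv_sum g (K+1) hk (by omega)]
  abel

lemma cycle (g k : ℕ) (hk : k ≤ g) (hk1 : 1 ≤ k) :
    ((Amat g k)^(2*k+1)) *ᵥ vv g 0 = vv g 0 := by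
  obtain ⟨K, rfl⟩ : ∃ K, k = K+1 := ⟨k-1, by omega⟩
  have e1 : 2*(K+1)+1 = ((2*K+1)+1)+1 := by ring
  rw [e1, pow_succ', ← Matrix.mulVec_mulVec, pow_succ', ← Matrix.mulVec_mulVec,
    orbit g (K+1) hk (2*K+1) (by omega), step_last g (K+1) K hk rfl,
    Matrix.mulVec_neg, Asv g (K+1) hk (by omega), neg_neg]

lemma fix_vv (g k : ℕ) (hk : k ≤ g) (hk1 : 1 ≤ k) (t : ℕ) (ht : t < 2*k) :
    ((Amat g k)^(2*k+1)) *ᵥ vv g t = vv g t := by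
  rw [← orbit g k hk t ht, Matrix.mulVec_mulVec, pow_mul_comm, ← Matrix.mulVec_mulVec,
    cycle g k hk hk1]

def colVec (g : ℕ) (c : Fin g ⊕ Fin g) : (Fin g ⊕ Fin g) → ℤ := fun r => if r = c then 1 else 0

lemma mulVec_colVec {g : ℕ} (M : Matrix (Fin g ⊕ Fin g) (Fin g ⊕ Fin g) ℤ) (c : Fin g ⊕ Fin g) :
    M *ᵥ colVec g c = fun r => M r c := by
  funext r
  simp [Matrix.mulVec, dotProduct, colVec, mul_ite, mul_one, mul_zero,
    Finset.sum_ite_eq']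

lemma fix_pow {g : ℕ} (M : Matrix (Fin g ⊕ Fin g) (Fin g ⊕ Fin g) ℤ) (x : (Fin g ⊕ Fin g) → ℤ)
    (h : M *ᵥ x = x) (n : ℕ) : (M^n) *ᵥ x = x := by
  induction n with
  | zero => rw [pow_zero, Matrix.one_mulVec]
  | succ m ih => rw [pow_succ', ← Matrix.mulVec_mulVec, ih, h]


lemma colVec_inr_eq (g : ℕ) (j : Fin g) : colVec g (.inr j) = vv g (2*(j:ℕ)+1) := by
  funext r
  rcases r with a | a
  · show (if (Sum.inl a : Fin g ⊕ Fin g) = Sum.inr j then (1:ℤ) else 0) = vvl (2*(j:ℕ)+1) ↑a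
    rw [if_neg (by simp), vvl, if_neg (by omega), if_neg (by omega)]
  · show (if (Sum.inr a : Fin g ⊕ Fin g) = Sum.inr j then (1:ℤ) else 0) = vvr (2*(j:ℕ)+1) ↑a
    rw [vvr]
    simp only [Sum.inr.injEq, Fin.ext_iff]
    split_ifs <;> omega

lemma colVec_inl_eq (g : ℕ) (j : Fin g) :
    (∑ i ∈ range ((j:ℕ)+1), vv g (2*i)) = colVec g (.inl j) := by
  funext r
  rw [Finset.sum_apply]
  rcases r with a | a
  · have h3 : ∀ i ∈ range ((j:ℕ)+1), vv g (2*i) (Sum.inl a)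
        = (if i = (a:ℕ) then (1:ℤ) else 0) + (if i = (a:ℕ)+1 then (-1:ℤ) else 0) := by
      intro i _
      show vvl (2*i) ↑a = _
      rw [vvl]
      split_ifs <;> (first | ring1 | (exfalso; omega) | (exfalso; simp_all))
    rw [Finset.sum_congr rfl h3, Finset.sum_add_distrib, Finset.sum_ite_eq', Finset.sum_ite_eq']
    show _ = (if (Sum.inl a : Fin g ⊕ Fin g) = Sum.inl j then (1:ℤ) else 0)
    simp only [mem_range, Sum.inl.injEq, Fin.ext_iff]
    split_ifs <;> omega
  · have h3 : ∀ i ∈ range ((j:ℕ)+1), vv g (2*i) (Sum.inr a) = (0:ℤ) := by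
      intro i _
      show vvr (2*i) ↑a = 0
      rw [vvr, if_neg (by omega)]
    rw [Finset.sum_congr rfl h3, Finset.sum_const, smul_zero]
    show (0:ℤ) = (if (Sum.inr a : Fin g ⊕ Fin g) = Sum.inl j then (1:ℤ) else 0)
    rw [if_neg (by simp)]

lemma col_ge_l (g k : ℕ) (j : Fin g) (hj : k ≤ (j:ℕ)) :
    (Amat g k) *ᵥ colVec g (.inl j) = colVec g (.inl j) := by
  rw [mulVec_colVec]
  funext r
  rcases r with a | a
  · show a11 k ↑a ↑j = (if (Sum.inl a : Fin g ⊕ Fin g) = Sum.inl j then (1:ℤ) else 0)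
    rw [a11]
    simp only [Sum.inl.injEq, Fin.ext_iff]
    split_ifs <;> omega
  · show a21 k ↑a ↑j = (if (Sum.inr a : Fin g ⊕ Fin g) = Sum.inl j then (1:ℤ) else 0)
    rw [a21, if_neg (by omega), if_neg (by simp)]

lemma col_ge_r (g k : ℕ) (j : Fin g) (hj : k ≤ (j:ℕ)) :
    (Amat g k) *ᵥ colVec g (.inr j) = colVec g (.inr j) := by
  rw [mulVec_colVec]
  funext r
  rcases r with a | a
  · show a12 k ↑a ↑j = (if (Sum.inl a : Fin g ⊕ Fin g) = Sum.inr j then (1:ℤ) else 0)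
    rw [a12, if_neg (by omega), if_neg (by omega), if_neg (by simp)]
  · show a22 k ↑a ↑j = (if (Sum.inr a : Fin g ⊕ Fin g) = Sum.inr j then (1:ℤ) else 0)
    rw [a22, if_neg (by omega)]
    simp only [Sum.inr.injEq, Fin.ext_iff]
    split_ifs <;> (first | rfl | (exfalso; omega))

theorem Apow (g k : ℕ) (hk : k ≤ g) (hk1 : 1 ≤ k) : (Amat g k)^(2*k+1) = 1 := by
  ext r c
  have hcol : ((Amat g k)^(2*k+1)) r c = (((Amat g k)^(2*k+1)) *ᵥ colVec g c) r := by
    rw [mulVec_colVec]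
  rw [hcol]
  have hone : (1 : Matrix (Fin g ⊕ Fin g) (Fin g ⊕ Fin g) ℤ) r c = colVec g c r := by
    rw [Matrix.one_apply, colVec]
  rw [hone]
  rcases c with j | j
  · by_cases hj : (j:ℕ) < k
    · rw [← colVec_inl_eq g j, mulVec_sum']
      have hfix : ∀ i ∈ range ((j:ℕ)+1), ((Amat g k)^(2*k+1)) *ᵥ vv g (2*i) = vv g (2*i) := by
        intro i hi
        simp only [mem_range] at hi
        exact fix_vv g k hk hk1 (2*i) (by omega)
      rw [Finset.sum_congr rfl hfix]
    · rw [fix_pow _ _ (col_ge_l g k j (by omega)) _]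
  · by_cases hj : (j:ℕ) < k
    · rw [colVec_inr_eq g j, fix_vv g k hk hk1 (2*(j:ℕ)+1) (by omega)]
    · rw [fix_pow _ _ (col_ge_r g k j (by omega)) _]

theorem Ane (g k : ℕ) (hg : 0 < g) (hk1 : 1 ≤ k) : Amat g k ≠ 1 := by
  intro h
  have h1 : Amat g k (Sum.inr ⟨0, hg⟩) (Sum.inl ⟨0, hg⟩) = 1 := by
    show a21 k 0 0 = 1
    rw [a21, if_pos ⟨by omega, le_refl 0⟩]
  rw [h, Matrix.one_apply_ne (by simp)] at h1
  exact absurd h1 (by norm_num)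

end Stmt7Aux

theorem stmt_7 (g p : ℕ) (hg : 1 ≤ g) (hp : p.Prime) (hple : p ≤ 2 * g + 1) :
    ∃ A : Matrix (Fin g ⊕ Fin g) (Fin g ⊕ Fin g) ℤ,
      IsSymplectic g A ∧ orderOf A = p := by
  haveI : Fact p.Prime := ⟨hp⟩
  rcases hp.eq_two_or_odd with rfl | hodd
  · refine ⟨-1, ?_, ?_⟩
    · show (-1 : Matrix (Fin g ⊕ Fin g) (Fin g ⊕ Fin g) ℤ)ᵀ * SpJ g * (-1) = SpJ g
      simp
    · apply orderOf_eq_prime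
      · rw [neg_one_sq]
      · intro h
        have h2 : ((-1 : Matrix (Fin g ⊕ Fin g) (Fin g ⊕ Fin g) ℤ))
            (Sum.inl ⟨0, hg⟩) (Sum.inl ⟨0, hg⟩) = -1 := by
          simp [Matrix.one_apply]
        rw [h, Matrix.one_apply_eq] at h2
        exact absurd h2 (by norm_num)
  · obtain ⟨k, rfl⟩ : ∃ k, p = 2*k+1 := ⟨p/2, by omega⟩
    have hk1 : 1 ≤ k := by have := hp.one_lt; omega
    have hk : k ≤ g := by omega
    exact ⟨Stmt7Aux.Amat g k, Stmt7Aux.symp g k hk,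
      orderOf_eq_prime (Stmt7Aux.Apow g k hk hk1) (Stmt7Aux.Ane g k hg hk1)⟩
end

section
/- If A ∈ Sp(4,ℤ) has finite order m, then m ∈ {1, 2, 3, 4, 5, 6, 8, 10, 12}. -/
open Matrix Polynomial

/-- The standard symplectic form matrix `J = [[0, I₂], [-I₂, 0]]` for `Sp(4, ℤ)`. -/
def J4 : Matrix (Fin 4) (Fin 4) ℤ :=
  !![0, 0, 1, 0; 0, 0, 0, 1; -1, 0, 0, 0; 0, -1, 0, 0]

/-- `A` belongs to `Sp(4, ℤ)`, i.e. `Aᵀ J A = J`. -/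
def IsSymplectic4 (A : Matrix (Fin 4) (Fin 4) ℤ) : Prop :=
  Aᵀ * J4 * A = J4

open scoped Classical

/-- A squarefree polynomial dividing a product of irreducibles divides the product of
those irreducibles which divide it. -/
private lemma sqfree_dvd_prod_filter {ι : Type*} [DecidableEq ι] (s : Finset ι)
    (p : ι → Polynomial ℚ) :
    ∀ q : Polynomial ℚ, (∀ i ∈ s, Irreducible (p i)) → Squarefree q →
      q ∣ ∏ i ∈ s, p i → q ∣ ∏ i ∈ s.filter (fun i => p i ∣ q), p i := by
  induction s using Finset.induction_on with
  | empty => intro q _ _ h; simpa using h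
  | @insert a s ha ih =>
    intro q hp hq hdvd
    rw [Finset.prod_insert ha] at hdvd
    have hpa : Irreducible (p a) := hp a (Finset.mem_insert_self a s)
    by_cases hdq : p a ∣ q
    · obtain ⟨q', rfl⟩ := hdq
      have hq' : Squarefree q' := hq.squarefree_of_dvd (dvd_mul_left q' (p a))
      have h2 : q' ∣ ∏ i ∈ s, p i :=
        (mul_dvd_mul_iff_left hpa.ne_zero).mp hdvd
      have h3 := ih q' (fun i hi => hp i (Finset.mem_insert_of_mem hi)) hq' h2
      rw [Finset.filter_insert, if_pos (dvd_mul_right (p a) q'), Finset.prod_insert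
        (fun hmem => ha (Finset.mem_of_mem_filter a hmem))]
      have hss : s.filter (fun i => p i ∣ q') ⊆ s.filter (fun i => p i ∣ p a * q') := by
        intro i hi
        rw [Finset.mem_filter] at hi ⊢
        exact ⟨hi.1, hi.2.mul_left (p a)⟩
      exact mul_dvd_mul_left (p a) (h3.trans (Finset.prod_dvd_prod_of_subset _ _ _ hss))
    · have hcop : IsCoprime (p a) q := hpa.coprime_iff_not_dvd.mpr hdq
      have h2 : q ∣ ∏ i ∈ s, p i := hcop.symm.dvd_of_dvd_mul_left hdvd
      rw [Finset.filter_insert, if_neg hdq]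
      exact ih q (fun i hi => hp i (Finset.mem_insert_of_mem hi)) hq h2

private lemma totient_le_four_dvd_120 {d : ℕ} (hd : 0 < d) (h : d.totient ≤ 4) :
    d ∣ 120 := by
  have h2val : (120 : ℕ).factorization 2 = 3 := by
    rw [show (120 : ℕ) = 2 ^ 3 * 15 by norm_num,
      Nat.factorization_mul (by norm_num) (by norm_num),
      Nat.Prime.factorization_pow Nat.prime_two]
    simp [Nat.factorization_eq_zero_of_not_dvd (by norm_num : ¬(2 : ℕ) ∣ 15)]
  have h3val : (120 : ℕ).factorization 3 = 1 := by
    rw [show (120 : ℕ) = 3 * 40 by norm_num,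
      Nat.factorization_mul (by norm_num) (by norm_num)]
    simp [Nat.Prime.factorization Nat.prime_three,
      Nat.factorization_eq_zero_of_not_dvd (by norm_num : ¬(3 : ℕ) ∣ 40)]
  have h5val : (120 : ℕ).factorization 5 = 1 := by
    rw [show (120 : ℕ) = 5 * 24 by norm_num,
      Nat.factorization_mul (by norm_num) (by norm_num)]
    simp [Nat.Prime.factorization Nat.prime_five,
      Nat.factorization_eq_zero_of_not_dvd (by norm_num : ¬(5 : ℕ) ∣ 24)]
  rw [← Nat.factorization_le_iff_dvd hd.ne' (by norm_num)]
  intro p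
  by_cases hp : p.Prime
  swap
  · simp [Nat.factorization_eq_zero_of_not_prime _ hp]
  rcases Nat.eq_zero_or_pos (d.factorization p) with h0 | hk
  · simp [h0]
  have hdvd : p ^ d.factorization p ∣ d := Nat.ordProj_dvd d p
  have h4 : (p ^ d.factorization p).totient ≤ 4 :=
    (Nat.le_of_dvd (Nat.totient_pos.mpr hd) (Nat.totient_dvd_of_dvd hdvd)).trans h
  rw [Nat.totient_prime_pow hp hk] at h4
  have hp2 : 2 ≤ p := hp.two_le
  have hp1 : p - 1 ≤ 4 :=
    le_trans (Nat.le_mul_of_pos_left _ (pow_pos hp.pos _)) h4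
  have hp5 : p ≤ 5 := by omega
  interval_cases p
  · -- p = 2
    rw [h2val]
    by_contra hgt
    push_neg at hgt
    have : 2 ^ 3 ≤ 2 ^ (d.factorization 2 - 1) :=
      Nat.pow_le_pow_right (by norm_num) (by omega)
    omega
  · -- p = 3
    rw [h3val]
    by_contra hgt
    push_neg at hgt
    have : 3 ^ 1 ≤ 3 ^ (d.factorization 3 - 1) :=
      Nat.pow_le_pow_right (by norm_num) (by omega)
    omega
  · exact absurd hp (by norm_num)
  · -- p = 5
    rw [h5val]
    by_contra hgt
    push_neg at hgt
    have : 5 ^ 1 ≤ 5 ^ (d.factorization 5 - 1) :=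
      Nat.pow_le_pow_right (by norm_num) (by omega)
    omega

private lemma mem_good_of_totient {d : ℕ} (hd : 0 < d) (h : d.totient ≤ 4) :
    d = 1 ∨ d = 2 ∨ d = 3 ∨ d = 4 ∨ d = 5 ∨ d = 6 ∨ d = 8 ∨ d = 10 ∨ d = 12 := by
  have h120 : d ∣ 120 := totient_le_four_dvd_120 hd h
  have hmem : d ∈ Nat.divisors 120 := Nat.mem_divisors.mpr ⟨h120, by norm_num⟩
  have hall : ∀ x ∈ Nat.divisors 120, x.totient ≤ 4 →
      (x = 1 ∨ x = 2 ∨ x = 3 ∨ x = 4 ∨ x = 5 ∨ x = 6 ∨ x = 8 ∨ x = 10 ∨ x = 12) := by decide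
  exact hall d hmem h

theorem stmt_8 (A : Matrix (Fin 4) (Fin 4) ℤ) (hA : IsSymplectic4 A)
    (m : ℕ) (hm : orderOf A = m) (hfin : 0 < m) :
    m ∈ ({1, 2, 3, 4, 5, 6, 8, 10, 12} : Set ℕ) := by
  have hA1 : A ^ m = 1 := by rw [← hm]; exact pow_orderOf_eq_one A
  set f : Matrix (Fin 4) (Fin 4) ℤ →+* Matrix (Fin 4) (Fin 4) ℚ :=
    (Int.castRingHom ℚ).mapMatrix with hf
  set B : Matrix (Fin 4) (Fin 4) ℚ := f A with hB
  have hB1 : B ^ m = 1 := by rw [hB, ← _root_.map_pow, hA1, _root_.map_one]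
  set q : Polynomial ℚ := minpoly ℚ B with hqdef
  have haev : Polynomial.aeval B ((X : Polynomial ℚ) ^ m - 1) = 0 := by
    rw [_root_.map_sub, _root_.map_pow, aeval_X, _root_.map_one, hB1, sub_self]
  have hq1 : q ∣ X ^ m - 1 := minpoly.dvd ℚ B haev
  have hint : IsIntegral ℚ B := ⟨X ^ m - 1,
    monic_X_pow_sub (by rw [degree_one]; exact_mod_cast hfin), by
      rw [← aeval_def]; exact haev⟩
  have hsqXm : Squarefree (X ^ m - 1 : Polynomial ℚ) :=
    (X_pow_sub_one_separable_iff.mpr (by exact_mod_cast hfin.ne')).squarefree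
  have hsq : Squarefree q := hsqXm.squarefree_of_dvd hq1
  have hXm : (X ^ m - 1 : Polynomial ℚ) = ∏ d ∈ m.divisors, cyclotomic d ℚ :=
    (prod_cyclotomic_eq_X_pow_sub_one hfin ℚ).symm
  set D : Finset ℕ := m.divisors.filter (fun d => cyclotomic d ℚ ∣ q) with hD
  have hirr : ∀ d ∈ m.divisors, Irreducible (cyclotomic d ℚ) :=
    fun d hd => cyclotomic.irreducible_rat (Nat.pos_of_mem_divisors hd)
  have hqD : q ∣ ∏ d ∈ D, cyclotomic d ℚ :=
    sqfree_dvd_prod_filter m.divisors (fun d => cyclotomic d ℚ) q hirr hsq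
      (by rw [← hXm]; exact hq1)
  have hDq : (∏ d ∈ D, cyclotomic d ℚ) ∣ q :=
    Finset.prod_dvd_of_coprime
      (fun d hd e he hne => cyclotomic.isCoprime_rat hne)
      (fun d hd => (Finset.mem_filter.mp hd).2)
  have hqne : q ≠ 0 := minpoly.ne_zero hint
  have hdeg : q.natDegree ≤ 4 := by
    have h1 := natDegree_le_of_dvd (minpoly_dvd_charpoly B) (charpoly_monic B).ne_zero
    rwa [charpoly_natDegree_eq_dim, Fintype.card_fin] at h1
  have hsum : ∑ d ∈ D, d.totient ≤ 4 := by
    have h1 := natDegree_le_of_dvd hDq hqne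
    rw [natDegree_prod _ _ (fun d hd => (cyclotomic_ne_zero d ℚ))] at h1
    simp only [natDegree_cyclotomic] at h1
    exact h1.trans hdeg
  have hDpos : ∀ d ∈ D, 0 < d := fun d hd =>
    Nat.pos_of_mem_divisors (Finset.mem_of_mem_filter d hd)
  have key : ∀ L : ℕ, 0 < L → (∀ d ∈ D, d ∣ L) → m ∣ L := by
    intro L hL hdL
    have hsub : D ⊆ L.divisors := fun d hd => Nat.mem_divisors.mpr ⟨hdL d hd, hL.ne'⟩
    have hqL : q ∣ (X ^ L - 1 : Polynomial ℚ) := by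
      refine hqD.trans ((Finset.prod_dvd_prod_of_subset _ _ _ hsub).trans ?_)
      rw [prod_cyclotomic_eq_X_pow_sub_one hL ℚ]
    have hBL : B ^ L = 1 := by
      obtain ⟨c, hc⟩ := hqL
      have h0 : Polynomial.aeval B ((X : Polynomial ℚ) ^ L - 1) = 0 := by
        rw [hc, _root_.map_mul, minpoly.aeval, zero_mul]
      rw [_root_.map_sub, _root_.map_pow, aeval_X, _root_.map_one, sub_eq_zero] at h0
      exact h0
    have hAL : A ^ L = 1 := by
      have hmap : f (A ^ L) = f 1 := by
        rw [_root_.map_pow, _root_.map_one, ← hB, hBL]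
      ext i j
      have h2 := congrFun (congrFun hmap i) j
      simp only [hf, RingHom.mapMatrix_apply, Matrix.map_apply] at h2
      exact Int.cast_injective h2
    rw [← hm]
    exact orderOf_dvd_of_pow_eq_one hAL
  have hgood : ∀ d ∈ D,
      d = 1 ∨ d = 2 ∨ d = 3 ∨ d = 4 ∨ d = 5 ∨ d = 6 ∨ d = 8 ∨ d = 10 ∨ d = 12 := by
    intro d hd
    refine mem_good_of_totient (hDpos d hd) ?_
    calc d.totient ≤ ∑ e ∈ D, e.totient :=
          Finset.single_le_sum (fun e _ => Nat.zero_le _) hd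
    _ ≤ 4 := hsum
  have hfinal : m ∣ 8 ∨ m ∣ 10 ∨ m ∣ 12 := by
    by_cases hc : ∀ d ∈ D, d ∣ 12
    · exact Or.inr (Or.inr (key 12 (by norm_num) hc))
    · push_neg at hc
      obtain ⟨d₀, hd₀D, hd₀n⟩ := hc
      have hd₀ : d₀ = 5 ∨ d₀ = 8 ∨ d₀ = 10 := by
        rcases hgood d₀ hd₀D with h|h|h|h|h|h|h|h|h <;> subst h <;> omega
      have htot4 : d₀.totient = 4 := by rcases hd₀ with rfl|rfl|rfl <;> decide
      have hsingle : ∀ e ∈ D, e = d₀ := by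
        intro e heD
        by_contra hne
        have hsplit : d₀.totient + ∑ x ∈ D.erase d₀, x.totient = ∑ x ∈ D, x.totient :=
          Finset.add_sum_erase D Nat.totient hd₀D
        have he' : e ∈ D.erase d₀ := Finset.mem_erase.mpr ⟨hne, heD⟩
        have h1 : e.totient ≤ ∑ x ∈ D.erase d₀, x.totient :=
          Finset.single_le_sum (fun x _ => Nat.zero_le _) he'
        have h2 : 0 < e.totient := Nat.totient_pos.mpr (hDpos e heD)
        omega
      have hmd : m ∣ d₀ := key d₀ (by rcases hd₀ with rfl|rfl|rfl <;> norm_num)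
        (fun e he => (hsingle e he) ▸ dvd_refl d₀)
      rcases hd₀ with rfl|rfl|rfl
      · exact Or.inr (Or.inl (hmd.trans (by norm_num)))
      · exact Or.inl hmd
      · exact Or.inr (Or.inl hmd)
  simp only [Set.mem_insert_iff, Set.mem_singleton_iff]
  have hle : m ≤ 12 := by
    rcases hfinal with h|h|h
    · exact (Nat.le_of_dvd (by norm_num) h).trans (by norm_num)
    · exact (Nat.le_of_dvd (by norm_num) h).trans (by norm_num)
    · exact Nat.le_of_dvd (by norm_num) h
  interval_cases m <;> revert hfinal <;> decide
end

section
/- Every element of Sp(4,ℤ) of finite order has order at most 12. -/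
open Matrix

/-!
An element `a` of finite order `m` in a `ℚ`-algebra is annihilated by
`X ^ m - 1 = ∏_{d ∣ m} Φ_d`, so its minimal polynomial is the product of the (irreducible,
pairwise coprime) cyclotomic polynomials `Φ_d`, `d ∈ D`, dividing it. Hence
`∑_{d ∈ D} φ(d) = deg (minpoly a)` and `orderOf a = lcm D`. For a `4 × 4` matrix the degree is
at most `4`, and the only sets of positive integers with `∑ φ(d) ≤ 4` have lcm dividing `12`
or are a singleton `{5}`, `{8}`, `{10}`.
-/

open Polynomial

theorem dvd_prod_filter_of_dvd_prod {R ι : Type*} [CommRing R] [IsBezout R] {s : Finset ι}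
    {f : ι → R} {p : R} [DecidablePred fun i => f i ∣ p] (hf : ∀ i ∈ s, Irreducible (f i))
    (hp : p ∣ ∏ i ∈ s, f i) : p ∣ ∏ i ∈ s with f i ∣ p, f i := by
  rw [← Finset.prod_filter_mul_prod_filter_not s fun i => f i ∣ p] at hp
  refine (IsCoprime.prod_right fun i hi => ?_).dvd_of_dvd_mul_right hp
  rw [Finset.mem_filter] at hi
  exact ((hf i hi.1).coprime_iff_not_dvd.2 hi.2).symm

open Function in
theorem pairwise_isCoprime_cyclotomic_rat (s : Set ℕ) :
    s.Pairwise (IsCoprime on fun d => cyclotomic d ℚ) :=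
  fun _ _ _ _ hde => cyclotomic.isCoprime_rat hde

section CyclotomicIndices

variable {A : Type*} [Ring A] [Algebra ℚ A] {a : A}

open scoped Classical

noncomputable def cyclotomicIndices (a : A) : Finset ℕ :=
  {d ∈ (orderOf a).divisors | cyclotomic d ℚ ∣ minpoly ℚ a}

theorem minpoly_eq_prod_cyclotomicIndices (ha : 0 < orderOf a) :
    minpoly ℚ a = ∏ d ∈ cyclotomicIndices a, cyclotomic d ℚ := by
  have hint : IsIntegral ℚ a :=
    IsIntegral.of_pow ha (by rw [pow_orderOf_eq_one]; exact isIntegral_one)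
  refine eq_of_monic_of_associated (minpoly.monic hint)
    (monic_prod_of_monic _ _ fun d _ => cyclotomic.monic d ℚ) (associated_of_dvd_dvd ?_ ?_)
  · refine dvd_prod_filter_of_dvd_prod
      (fun d hd => cyclotomic.irreducible_rat (Nat.pos_of_mem_divisors hd)) ?_
    rw [prod_cyclotomic_eq_X_pow_sub_one ha, minpoly.dvd_iff]
    simp [pow_orderOf_eq_one]
  · exact Finset.prod_dvd_of_coprime (pairwise_isCoprime_cyclotomic_rat _)
      fun d hd => (Finset.mem_filter.1 hd).2

theorem sum_totient_cyclotomicIndices (ha : 0 < orderOf a) :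
    ∑ d ∈ cyclotomicIndices a, d.totient = (minpoly ℚ a).natDegree := by
  rw [minpoly_eq_prod_cyclotomicIndices ha,
    natDegree_prod _ _ fun d _ => cyclotomic_ne_zero d ℚ]
  simp only [natDegree_cyclotomic]

theorem orderOf_eq_lcm_cyclotomicIndices (ha : 0 < orderOf a) :
    orderOf a = (cyclotomicIndices a).lcm id := by
  refine Nat.dvd_antisymm (orderOf_dvd_of_pow_eq_one ?_)
    (Finset.lcm_dvd fun d hd => Nat.dvd_of_mem_divisors (Finset.mem_filter.1 hd).1)
  have hdvd : minpoly ℚ a ∣ X ^ (cyclotomicIndices a).lcm id - 1 := by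
    rw [minpoly_eq_prod_cyclotomicIndices ha]
    exact Finset.prod_dvd_of_coprime (pairwise_isCoprime_cyclotomic_rat _) fun d hd =>
      (cyclotomic.dvd_X_pow_sub_one d ℚ).trans
        (dvd_pow_sub_one_of_dvd (Finset.dvd_lcm (f := id) hd))
  simpa [sub_eq_zero] using minpoly.dvd_iff.1 hdvd

theorem zero_notMem_cyclotomicIndices : 0 ∉ cyclotomicIndices a := fun h =>
  (Nat.pos_of_mem_divisors (Finset.mem_filter.1 h).1).ne rfl

end CyclotomicIndices

theorem Matrix.natDegree_minpoly_le {n K : Type*} [Fintype n] [DecidableEq n] [Field K]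
    (M : Matrix n n K) : (minpoly K M).natDegree ≤ Fintype.card n :=
  charpoly_natDegree_eq_dim M ▸ natDegree_le_of_dvd M.minpoly_dvd_charpoly M.charpoly_monic.ne_zero

theorem Nat.dvd_120_of_totient_le_four {n : ℕ} (hn : n ≠ 0) (h : n.totient ≤ 4) : n ∣ 120 := by
  refine (Nat.dvd_iff_prime_pow_dvd_dvd 120 n).2 fun p k hp hpk => ?_
  rcases k with _ | k
  · simp
  have hφ : (p ^ (k + 1)).totient ≤ 4 :=
    (Nat.le_of_dvd (Nat.totient_pos.2 (Nat.pos_of_ne_zero hn)) (Nat.totient_dvd_of_dvd hpk)).trans h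
  -- `p ^ (k + 1) ≤ 2 φ(p ^ (k + 1))`, leaving only prime powers up to `8`
  have hle : p ^ (k + 1) ≤ 8 := by
    rw [Nat.totient_prime_pow_succ hp] at hφ
    have := hp.two_le
    calc p ^ (k + 1) = p ^ k * p := pow_succ p k
      _ ≤ p ^ k * (2 * (p - 1)) := Nat.mul_le_mul_left _ (by omega)
      _ ≤ 8 := by nlinarith
  have key : ∀ q ∈ Finset.Icc 1 8, q.totient ≤ 4 → q ∣ 120 := by decide
  exact key _ (Finset.mem_Icc.2 ⟨Nat.one_le_pow _ _ hp.pos, hle⟩) hφ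

theorem Finset.lcm_le_twelve_of_sum_totient_le_four {D : Finset ℕ} (h0 : 0 ∉ D)
    (hD : ∑ d ∈ D, d.totient ≤ 4) : D.lcm id ≤ 12 := by
  have hφ : ∀ d ∈ D, d.totient ≤ 4 := fun d hd =>
    (Finset.single_le_sum (f := Nat.totient) (fun _ _ => Nat.zero_le _) hd).trans hD
  by_cases hall : ∀ d ∈ D, d ∣ 12
  · exact Nat.le_of_dvd (by norm_num) (Finset.lcm_dvd hall)
  push Not at hall
  obtain ⟨e, he, he12⟩ := hall
  have hne : e ≠ 0 := fun h => h0 (h ▸ he)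
  have key : ∀ d ∈ Nat.divisors 120, ¬ d ∣ 12 → d.totient ≤ 4 → d ≤ 12 ∧ d.totient = 4 := by
    decide
  obtain ⟨hle, hφe⟩ := key e (Nat.mem_divisors.2 ⟨Nat.dvd_120_of_totient_le_four hne (hφ e he),
    by norm_num⟩) he12 (hφ e he)
  have hDe : D = {e} := by
    refine Finset.eq_singleton_iff_unique_mem.2 ⟨he, fun d hd => by_contra fun hde => ?_⟩
    have hsum := (Finset.sum_le_sum_of_subset (f := Nat.totient)
      (Finset.insert_subset hd (Finset.singleton_subset_iff.2 he))).trans hD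
    rw [Finset.sum_pair hde, hφe] at hsum
    have := Nat.totient_pos.2 (Nat.pos_of_ne_zero fun h => h0 (h ▸ hd))
    omega
  simpa [hDe] using hle

theorem stmt_10_general (A : Matrix (Fin 4) (Fin 4) ℤ)
    (hfin : 0 < orderOf A) : orderOf A ≤ 12 := by
  set B : Matrix (Fin 4) (Fin 4) ℚ := (Int.castRingHom ℚ).mapMatrix A
  have hB : orderOf B = orderOf A :=
    orderOf_injective (Int.castRingHom ℚ).mapMatrix.toMonoidHom
      (Matrix.map_injective Int.cast_injective) A
  rw [← hB] at hfin ⊢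
  rw [orderOf_eq_lcm_cyclotomicIndices hfin]
  refine Finset.lcm_le_twelve_of_sum_totient_le_four zero_notMem_cyclotomicIndices ?_
  rw [sum_totient_cyclotomicIndices hfin]
  simpa using B.natDegree_minpoly_le

theorem stmt_10 (A : Matrix (Fin 4) (Fin 4) ℤ) (hA : IsSymplectic4 A)
    (hfin : 0 < orderOf A) : orderOf A ≤ 12 :=
  stmt_10_general A hfin
end

section
/- (Bender) The group Sp(4,ℤ) is generated by the two matrices K = [[1,0,0,0],[1,-1,0,0],[0,0,1,1],[0,0,0,-1]] and L = [[0,0,-1,0],[0,0,0,-1],[1,0,1,0],[0,1,0,0]]; that is, the subgroup of Sp(4,ℤ) generated by {K, L} is all of Sp(4,ℤ). -/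
/-!
Let `ι02`, `ι13` embed `SL(2, ℤ)` into `Sp(4, ℤ)` acting on the hyperbolic planes `⟨e₀, e₂⟩` and
`⟨e₁, e₃⟩`, and let `ιDiag A = A ⊕ A⁻ᵀ` act on the Lagrangian `⟨e₀, e₁⟩` and its dual. Explicit
words in `K` and `L` give the images of `S` and `T` under `ι13` and `ιDiag`; as `S, T` generate
`SL(2, ℤ)` and conjugation by `ιDiag S` swaps the two planes, all three copies of `SL(2, ℤ)` lie in
`⟨K, L⟩`. Conversely, for `M ∈ Sp(4, ℤ)` Euclid's algorithm inside these copies moves the first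
column of `M` to `gcd • e₀`, and the gcd is `1` because `M` is invertible. The symplectic relations
then force the `(2, 2)` entry to be `1`, so the third column can be moved to `e₂` keeping `e₀`
fixed, and a symplectic matrix fixing `e₀` and `e₂` lies in `ι13 (SL(2, ℤ))`.
-/

open Matrix

/-- The matrix `K` from Bender's presentation of `Sp(4, ℤ)`. -/
def Kmat : Matrix (Fin 4) (Fin 4) ℤ :=
  !![1, 0, 0, 0; 1, -1, 0, 0; 0, 0, 1, 1; 0, 0, 0, -1]

/-- The matrix `L` from Bender's presentation of `Sp(4, ℤ)`. -/
def Lmat : Matrix (Fin 4) (Fin 4) ℤ :=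
  !![0, 0, -1, 0; 0, 0, 0, -1; 1, 0, 1, 0; 0, 1, 0, 0]

private theorem sp4_mul_aux (A B : Matrix (Fin 4) (Fin 4) ℤ)
    (hA : Aᵀ * J4 * A = J4) (hB : Bᵀ * J4 * B = J4) :
    (A * B)ᵀ * J4 * (A * B) = J4 := by
  calc (A * B)ᵀ * J4 * (A * B) = Bᵀ * (Aᵀ * J4 * A) * B := by
        rw [transpose_mul]; noncomm_ring
    _ = Bᵀ * J4 * B := by rw [hA]
    _ = J4 := hB

private theorem sp4_inv_aux (A B : Matrix (Fin 4) (Fin 4) ℤ)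
    (hA : Aᵀ * J4 * A = J4) (hAB : A * B = 1) :
    Bᵀ * J4 * B = J4 := by
  calc Bᵀ * J4 * B = Bᵀ * (Aᵀ * J4 * A) * B := by rw [hA]
    _ = (A * B)ᵀ * J4 * (A * B) := by rw [transpose_mul]; noncomm_ring
    _ = J4 := by rw [hAB]; simp

/-- `Sp(4, ℤ)` as a subgroup of `GL(4, ℤ)`: the invertible integer matrices `A`
with `Aᵀ J A = J`. -/
def Sp4 : Subgroup (GL (Fin 4) ℤ) where
  carrier := {A | (A : Matrix (Fin 4) (Fin 4) ℤ)ᵀ * J4 * (A : Matrix (Fin 4) (Fin 4) ℤ) = J4}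
  one_mem' := by simp
  mul_mem' := by
    intro a b ha hb
    simp only [Set.mem_setOf_eq, Units.val_mul] at *
    exact sp4_mul_aux _ _ ha hb
  inv_mem' := by
    intro a ha
    simp only [Set.mem_setOf_eq] at *
    exact sp4_inv_aux (a : Matrix (Fin 4) (Fin 4) ℤ) _ ha a.mul_inv

open MatrixGroups ModularGroup

section Embeddings

variable {R : Type*} [CommRing R]

def emb02 : Matrix (Fin 2) (Fin 2) R →* Matrix (Fin 4) (Fin 4) R where
  toFun A := !![A 0 0, 0, A 0 1, 0; 0, 1, 0, 0; A 1 0, 0, A 1 1, 0; 0, 0, 0, 1]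
  map_one' := by ext i j; fin_cases i <;> fin_cases j <;> rfl
  map_mul' A B := by
    ext i j
    fin_cases i <;> fin_cases j <;> simp [mul_apply, Fin.sum_univ_four, Fin.sum_univ_two]

def emb13 : Matrix (Fin 2) (Fin 2) R →* Matrix (Fin 4) (Fin 4) R where
  toFun A := !![1, 0, 0, 0; 0, A 0 0, 0, A 0 1; 0, 0, 1, 0; 0, A 1 0, 0, A 1 1]
  map_one' := by ext i j; fin_cases i <;> fin_cases j <;> rfl
  map_mul' A B := by
    ext i j
    fin_cases i <;> fin_cases j <;> simp [mul_apply, Fin.sum_univ_four, Fin.sum_univ_two]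

-- For `det A = 1` the lower block `adj(A)ᵀ` is `A⁻ᵀ`.
def embDiag : Matrix (Fin 2) (Fin 2) R →* Matrix (Fin 4) (Fin 4) R where
  toFun A := !![A 0 0, A 0 1, 0, 0; A 1 0, A 1 1, 0, 0; 0, 0, A 1 1, -A 1 0; 0, 0, -A 0 1, A 0 0]
  map_one' := by ext i j; fin_cases i <;> fin_cases j <;> simp
  map_mul' A B := by
    ext i j
    fin_cases i <;> fin_cases j <;> simp [mul_apply, Fin.sum_univ_four, Fin.sum_univ_two] <;> ring

def ι02 : SL(2, R) →* GL (Fin 4) R := (Units.map emb02).comp SpecialLinearGroup.toGL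
def ι13 : SL(2, R) →* GL (Fin 4) R := (Units.map emb13).comp SpecialLinearGroup.toGL
def ιDiag : SL(2, R) →* GL (Fin 4) R := (Units.map embDiag).comp SpecialLinearGroup.toGL

@[simp] lemma coe_ι02 (U : SL(2, R)) : (ι02 U : Matrix (Fin 4) (Fin 4) R) = emb02 U := rfl
@[simp] lemma coe_ι13 (U : SL(2, R)) : (ι13 U : Matrix (Fin 4) (Fin 4) R) = emb13 U := rfl
@[simp] lemma coe_ιDiag (U : SL(2, R)) : (ιDiag U : Matrix (Fin 4) (Fin 4) R) = embDiag U := rfl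

lemma emb02_mulVec (A : Matrix (Fin 2) (Fin 2) R) (v : Fin 4 → R) :
    emb02 A *ᵥ v = ![A 0 0 * v 0 + A 0 1 * v 2, v 1, A 1 0 * v 0 + A 1 1 * v 2, v 3] := by
  ext i; fin_cases i <;> simp [emb02, mulVec, dotProduct, Fin.sum_univ_four]

lemma emb13_mulVec (A : Matrix (Fin 2) (Fin 2) R) (v : Fin 4 → R) :
    emb13 A *ᵥ v = ![v 0, A 0 0 * v 1 + A 0 1 * v 3, v 2, A 1 0 * v 1 + A 1 1 * v 3] := by
  ext i; fin_cases i <;> simp [emb13, mulVec, dotProduct, Fin.sum_univ_four]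

lemma embDiag_mulVec (A : Matrix (Fin 2) (Fin 2) R) (v : Fin 4 → R) :
    embDiag A *ᵥ v = ![A 0 0 * v 0 + A 0 1 * v 1, A 1 0 * v 0 + A 1 1 * v 1,
      A 1 1 * v 2 - A 1 0 * v 3, A 0 0 * v 3 - A 0 1 * v 2] := by
  ext i; fin_cases i <;> simp [embDiag, mulVec, dotProduct, Fin.sum_univ_four] <;> ring

end Embeddings

lemma map_mem_of_S_mem_of_T_mem {G : Type*} [Group G] {H : Subgroup G} (f : SL(2, ℤ) →* G)
    (hS : f S ∈ H) (hT : f T ∈ H) (U : SL(2, ℤ)) : f U ∈ H := by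
  have hU : U ∈ Subgroup.closure {S, T} :=
    SpecialLinearGroup.SL2Z_generators ▸ Subgroup.mem_top U
  exact (Subgroup.closure_le (H.comap f)).2 (Set.pair_subset hS hT) hU

lemma isUnit_of_mulVec_single_eq {n R : Type*} [Fintype n] [DecidableEq n] [CommRing R]
    (N : GL n R) {i : n} {d : R} (h : (N : Matrix n n R) *ᵥ Pi.single i 1 = Pi.single i d) :
    IsUnit d := by
  have h' : ((N⁻¹ : GL n R) : Matrix n n R) *ᵥ Pi.single i d = Pi.single i 1 := by
    rw [← h, mulVec_mulVec, ← Units.val_mul, inv_mul_cancel, Units.val_one, one_mulVec]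
  have hii := congrFun h' i
  simp only [mulVec_single, Pi.single_eq_same] at hii
  exact .of_mul_eq_one_right _ hii

lemma exists_SL2_gcd (a b : ℤ) :
    ∃ U : SL(2, ℤ), U 0 0 * a + U 0 1 * b = a.gcd b ∧ U 1 0 * a + U 1 1 * b = 0 := by
  obtain h | hg := (a.gcd b).eq_zero_or_pos
  · obtain ⟨rfl, rfl⟩ := Int.gcd_eq_zero_iff.1 h
    exact ⟨1, by simp⟩
  obtain ⟨a', b', hab, ha, hb⟩ := Int.exists_gcd_one hg
  obtain ⟨U, hU0, hU1⟩ := (Int.isCoprime_iff_gcd_eq_one.2 hab).symm.neg_left.exists_SL2_row 1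
  have hdet := U.det_coe
  rw [det_fin_two, hU0, hU1] at hdet
  refine ⟨U, ?_, ?_⟩
  · linear_combination (a.gcd b : ℤ) * hdet + U 0 0 * ha + U 0 1 * hb
  · rw [hU0, hU1]; linear_combination (-b') * ha + a' * hb

lemma ι02_eq_conj (U : SL(2, ℤ)) : ι02 U = (ιDiag S)⁻¹ * ι13 U * ιDiag S := by
  rw [mul_assoc, eq_inv_mul_iff_mul_eq]
  ext i j
  fin_cases i <;> fin_cases j <;> simp [emb02, emb13, embDiag, mul_apply, Fin.sum_univ_four]

def genKL : Subgroup (GL (Fin 4) ℤ) :=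
  Subgroup.closure {A | (A : Matrix (Fin 4) (Fin 4) ℤ) = Kmat ∨ (A : Matrix (Fin 4) (Fin 4) ℤ) = Lmat}

lemma genKL_le_Sp4 : genKL ≤ Sp4 := by
  rw [genKL, Subgroup.closure_le]
  rintro A (hA | hA) <;>
  · change (A : Matrix (Fin 4) (Fin 4) ℤ)ᵀ * J4 * A = J4
    rw [hA]
    decide

def Kunit : GL (Fin 4) ℤ := ⟨Kmat, Kmat, by decide, by decide⟩

def Lunit : GL (Fin 4) ℤ :=
  ⟨Lmat, !![1, 0, 1, 0; 0, 0, 0, 1; -1, 0, 0, 0; 0, -1, 0, 0], by decide, by decide⟩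

lemma Kunit_mem : Kunit ∈ genKL := Subgroup.subset_closure (Or.inl rfl)

lemma Lunit_mem : Lunit ∈ genKL := Subgroup.subset_closure (Or.inr rfl)

-- Words found by a breadth-first search in `⟨K, L⟩`.
lemma ι13_S_eq : ι13 S = (Kunit * Lunit * Kunit * Lunit⁻¹ ^ 2 * Kunit * Lunit⁻¹ ^ 2) ^ 2 *
    Kunit * Lunit * Kunit * Lunit⁻¹ ^ 2 * Kunit * Lunit :=
  Units.ext (by decide)

lemma ι13_T_eq : ι13 T = (Kunit * Lunit ^ 2) ^ 3 := Units.ext (by decide)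

lemma ιDiag_S_eq : ιDiag S =
    Lunit * Kunit * Lunit⁻¹ ^ 5 * Kunit * Lunit⁻¹ ^ 5 * Kunit * Lunit ^ 2 * Kunit :=
  Units.ext (by decide)

lemma ιDiag_T_eq : ιDiag T = Lunit ^ 5 * Kunit * Lunit := Units.ext (by decide)

lemma ι13_mem (U : SL(2, ℤ)) : ι13 U ∈ genKL := by
  refine map_mem_of_S_mem_of_T_mem ι13 ?_ ?_ U <;> simp only [ι13_S_eq, ι13_T_eq] <;>
    repeat' first | apply mul_mem | apply pow_mem | apply inv_mem | exact Kunit_mem | exact Lunit_mem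

lemma ιDiag_mem (U : SL(2, ℤ)) : ιDiag U ∈ genKL := by
  refine map_mem_of_S_mem_of_T_mem ιDiag ?_ ?_ U <;> simp only [ιDiag_S_eq, ιDiag_T_eq] <;>
    repeat' first | apply mul_mem | apply pow_mem | apply inv_mem | exact Kunit_mem | exact Lunit_mem

lemma ι02_mem (U : SL(2, ℤ)) : ι02 U ∈ genKL := by
  rw [ι02_eq_conj]
  exact mul_mem (mul_mem (inv_mem (ιDiag_mem S)) (ι13_mem U)) (ιDiag_mem S)

lemma symplectic_form_cols_eq {N : Matrix (Fin 4) (Fin 4) ℤ} (hN : Nᵀ * J4 * N = J4) (i j : Fin 4) :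
    N 0 i * N 2 j + N 1 i * N 3 j - N 2 i * N 0 j - N 3 i * N 1 j = J4 i j := by
  rw [← hN]
  simp only [J4, mul_apply, transpose_apply, of_apply, cons_val', cons_val_fin_one,
    Fin.sum_univ_four, cons_val_zero, cons_val_one, cons_val]
  ring

lemma apply_of_mulVec_single_eq {N : Matrix (Fin 4) (Fin 4) ℤ} {j : Fin 4} {v : Fin 4 → ℤ}
    (h : N *ᵥ Pi.single j 1 = v) (i : Fin 4) : N i j = v i := by
  rw [← h, mulVec_single_one]; rfl

lemma apply_two_two_eq_one_of_mulVec_single_zero {N : Matrix (Fin 4) (Fin 4) ℤ} (hN : Nᵀ * J4 * N = J4)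
    (h0 : N *ᵥ Pi.single 0 1 = Pi.single 0 1) : N 2 2 = 1 := by
  simpa [J4, apply_of_mulVec_single_eq h0] using symplectic_form_cols_eq hN 0 2

lemma exists_eq_emb13_of_symplectic {N : Matrix (Fin 4) (Fin 4) ℤ} (hN : Nᵀ * J4 * N = J4)
    (h0 : N *ᵥ Pi.single 0 1 = Pi.single 0 1) (h2 : N *ᵥ Pi.single 2 1 = Pi.single 2 1) :
    ∃ V : SL(2, ℤ), N = emb13 V := by
  have hc0 := apply_of_mulVec_single_eq h0
  have hc2 := apply_of_mulVec_single_eq h2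
  have h21 : N 2 1 = 0 := by simpa [J4, hc0] using symplectic_form_cols_eq hN 0 1
  have h23 : N 2 3 = 0 := by simpa [J4, hc0] using symplectic_form_cols_eq hN 0 3
  have h01 : N 0 1 = 0 := by simpa [J4, hc2] using symplectic_form_cols_eq hN 2 1
  have h03 : N 0 3 = 0 := by simpa [J4, hc2] using symplectic_form_cols_eq hN 2 3
  have hdet : N 1 1 * N 3 3 - N 3 1 * N 1 3 = 1 := by
    simpa [J4, h21, h23, h01, h03] using symplectic_form_cols_eq hN 1 3
  refine ⟨⟨!![N 1 1, N 1 3; N 3 1, N 3 3], by rw [det_fin_two_of]; linear_combination hdet⟩, ?_⟩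
  ext i j
  fin_cases i <;> fin_cases j <;> simp [emb13, hc0, hc2, h21, h23, h01, h03]

lemma exists_mem_genKL_mulVec_eq_single_zero (v : Fin 4 → ℤ) :
    ∃ g ∈ genKL, ∃ d : ℕ, (g : Matrix (Fin 4) (Fin 4) ℤ) *ᵥ v = Pi.single 0 (d : ℤ) := by
  obtain ⟨U₁, hU₁, hU₁'⟩ := exists_SL2_gcd (v 0) (v 2)
  obtain ⟨U₂, hU₂, hU₂'⟩ := exists_SL2_gcd (v 1) (v 3)
  obtain ⟨U₃, hU₃, hU₃'⟩ := exists_SL2_gcd ((v 0).gcd (v 2)) ((v 1).gcd (v 3))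
  refine ⟨ιDiag U₃ * ι13 U₂ * ι02 U₁,
    mul_mem (mul_mem (ιDiag_mem U₃) (ι13_mem U₂)) (ι02_mem U₁),
    ((v 0).gcd (v 2)).gcd ((v 1).gcd (v 3)), ?_⟩
  simp only [Units.val_mul, ← mulVec_mulVec, coe_ι02, coe_ι13, coe_ιDiag, emb02_mulVec,
    emb13_mulVec, embDiag_mulVec]
  ext i
  fin_cases i <;> simp [hU₁, hU₁', hU₂, hU₂', hU₃, hU₃']

lemma exists_mem_genKL_mulVec_eq_single_two (w : Fin 4 → ℤ) (hw : w 2 = 1) :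
    ∃ g ∈ genKL, (g : Matrix (Fin 4) (Fin 4) ℤ) *ᵥ Pi.single 0 1 = Pi.single 0 1 ∧
      (g : Matrix (Fin 4) (Fin 4) ℤ) *ᵥ w = Pi.single 2 1 := by
  obtain ⟨U, hU, hU'⟩ := exists_SL2_gcd (w 1) (w 3)
  -- With `d = (w 1).gcd (w 3)`, `ι13 S * ι13 U` sends `w` to `(w 0, 0, 1, d)`; since `w 2 = 1`,
  -- `ιDiag (T ^ d)` then clears the last entry and `ι02 (T ^ (-w 0))` the first one.
  refine ⟨ι02 (T ^ (-w 0)) * ιDiag (T ^ ((w 1).gcd (w 3) : ℤ)) * ι13 S * ι13 U,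
    mul_mem (mul_mem (mul_mem (ι02_mem _) (ιDiag_mem _)) (ι13_mem _)) (ι13_mem _), ?_, ?_⟩
  all_goals
    simp only [Units.val_mul, ← mulVec_mulVec, coe_ι02, coe_ι13, coe_ιDiag, coe_T_zpow, coe_S,
      emb02_mulVec, emb13_mulVec, embDiag_mulVec]
    ext i
    fin_cases i <;> simp [hU, hU', hw]

theorem stmt_12 :
    Subgroup.closure {A : GL (Fin 4) ℤ |
        (A : Matrix (Fin 4) (Fin 4) ℤ) = Kmat ∨ (A : Matrix (Fin 4) (Fin 4) ℤ) = Lmat} =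
      Sp4 := by
  change genKL = Sp4
  refine le_antisymm genKL_le_Sp4 fun M hM => ?_
  obtain ⟨g, hg, d, hgM⟩ :=
    exists_mem_genKL_mulVec_eq_single_zero ((M : Matrix (Fin 4) (Fin 4) ℤ) *ᵥ Pi.single 0 1)
  rw [mulVec_mulVec, ← Units.val_mul] at hgM
  obtain rfl : d = 1 := Nat.isUnit_iff.1 (Int.ofNat_isUnit.1 (isUnit_of_mulVec_single_eq _ hgM))
  rw [Nat.cast_one] at hgM
  have hgM_sp : g * M ∈ Sp4 := mul_mem (genKL_le_Sp4 hg) hM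
  obtain ⟨h, hh, hh0, hh2⟩ := exists_mem_genKL_mulVec_eq_single_two
    (((g * M : GL (Fin 4) ℤ) : Matrix (Fin 4) (Fin 4) ℤ) *ᵥ Pi.single 2 1)
    (by simpa using apply_two_two_eq_one_of_mulVec_single_zero hgM_sp hgM)
  obtain ⟨V, hV⟩ := exists_eq_emb13_of_symplectic (mul_mem (genKL_le_Sp4 hh) hgM_sp)
    (by rw [Units.val_mul, ← mulVec_mulVec, hgM, hh0])
    (by rw [Units.val_mul, ← mulVec_mulVec, hh2])
  have hhgM : h * (g * M) ∈ genKL := (Units.ext hV : h * (g * M) = ι13 V) ▸ ι13_mem V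
  simpa using mul_mem (inv_mem (mul_mem hh hg)) hhgM
end
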